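/- arXiv:2508.09572 — 7 statements merged into one kernel-verified Lean document; each statement's English description precedes it below -/
import Mathlib

section
/- (P2) Let n ≥ 1. Every S(n)-θ-closed S(n)-space is weakly S(n)-θ-closed: every infinite subset of regular cardinality has a θ^0(n)-complete accumulation point. -/
open Set Topology Filter Cardinal

universe u

variable {X : Type u}

/-- `U` is an `n`-hull of `x`: there are open neighborhoods `U₁, …, Uₙ = U` of `x`
with `closure Uᵢ ⊆ Uᵢ₊₁` for `i = 1, …, n-1`. -/
def IsNHull [TopologicalSpace X] (n : ℕ) (x : X) (U : Set X) : Prop :=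
  ∃ Us : ℕ → Set X, (∀ i < n, IsOpen (Us i) ∧ x ∈ Us i) ∧
    (∀ i, i + 1 < n → closure (Us i) ⊆ Us (i + 1)) ∧ Us (n - 1) = U

/-- The `θⁿ`-closure of a set: `cl_{θ⁰} M = closure M`, and for `n ≥ 1`,
`x ∉ cl_{θⁿ} M` iff there is an `n`-hull `U` of `x` with `closure U ∩ M = ∅`. -/
def thetaCl [TopologicalSpace X] : ℕ → Set X → Set X
  | 0, M => closure M
  | (n + 1), M => {x | ∀ U : Set X, IsNHull (n + 1) x U → (closure U ∩ M).Nonempty}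

/-- The `θⁿ`-interior. -/
def thetaInt [TopologicalSpace X] (n : ℕ) (M : Set X) : Set X := (thetaCl n Mᶜ)ᶜ

/-- An `S(n)`-space: any two distinct points are `S(n)`-separated. -/
def IsSnSpace (n : ℕ) (X : Type u) [TopologicalSpace X] : Prop :=
  ∀ x y : X, x ≠ y → x ∉ thetaCl n {y}

/-- A set is `θ`-closed if it coincides with its `θ`-closure. -/
def IsThetaClosed [TopologicalSpace X] (M : Set X) : Prop := thetaCl 1 M = M

/-- An `S(n)`-closed space: its image is closed under every embedding into an `S(n)`-space. -/
def IsSnClosedSpace (n : ℕ) (X : Type u) [TopologicalSpace X] : Prop :=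
  ∀ (Z : Type u) [TopologicalSpace Z], IsSnSpace n Z →
    ∀ e : X → Z, Topology.IsEmbedding e → IsClosed (Set.range e)

/-- An `S(n)`-θ-closed space: its image is θ-closed under every embedding into an
`S(n)`-space. -/
def IsSnThetaClosedSpace (n : ℕ) (X : Type u) [TopologicalSpace X] : Prop :=
  ∀ (Z : Type u) [TopologicalSpace Z], IsSnSpace n Z →
    ∀ e : X → Z, Topology.IsEmbedding e → IsThetaClosed (Set.range e)

/-- A `θ⁰(n)`-complete accumulation point of `F`: `|F ∩ U| = |F|` for every `n`-hull `U`. -/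
def IsThetaZeroCompleteAccPt [TopologicalSpace X] (n : ℕ) (F : Set X) (x : X) : Prop :=
  ∀ U : Set X, IsNHull n x U → #(↥(F ∩ U)) = #(↥F)

/-- A `θ(n)`-complete accumulation point of `F`: `|F ∩ closure U| = |F|` for every
`n`-hull `U`. -/
def IsThetaCompleteAccPt [TopologicalSpace X] (n : ℕ) (F : Set X) (x : X) : Prop :=
  ∀ U : Set X, IsNHull n x U → #(↥(F ∩ closure U)) = #(↥F)

/-- Weakly `S(n)`-θ-closed: every infinite subset of regular cardinality has a
`θ⁰(n)`-complete accumulation point. -/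
def WeaklySnThetaClosed (n : ℕ) (X : Type u) [TopologicalSpace X] : Prop :=
  ∀ F : Set X, F.Infinite → (#(↥F)).IsRegular → ∃ x : X, IsThetaZeroCompleteAccPt n F x

/-- Weakly `S(n)`-closed: every infinite subset of regular cardinality has a
`θ(n)`-complete accumulation point. -/
def WeaklySnClosed (n : ℕ) (X : Type u) [TopologicalSpace X] : Prop :=
  ∀ F : Set X, F.Infinite → (#(↥F)).IsRegular → ∃ x : X, IsThetaCompleteAccPt n F x

/-- A (proper) open filter: a filter with a base of open sets. -/
def IsOpenFilter [TopologicalSpace X] (F : Filter X) : Prop :=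
  F.NeBot ∧ ∀ s ∈ F, ∃ U ∈ F, IsOpen U ∧ U ⊆ s

/-- A (proper) closed filter: a filter with a base of closed sets. -/
def IsClosedFilter [TopologicalSpace X] (F : Filter X) : Prop :=
  F.NeBot ∧ ∀ s ∈ F, ∃ C ∈ F, IsClosed C ∧ C ⊆ s

/-- `ad_{θⁿ} F`, the set of `θⁿ`-adherent points of a filter. -/
def adTheta [TopologicalSpace X] (n : ℕ) (F : Filter X) : Set X :=
  ⋂ s ∈ F, thetaCl n s

/-- An `S(n)`-filter: every point not adherent to `F` is `S(n)`-separated from some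
element of `F`. -/
def IsSnFilter [TopologicalSpace X] (n : ℕ) (F : Filter X) : Prop :=
  ∀ x : X, x ∉ adTheta 0 F → ∃ s ∈ F, x ∉ thetaCl n s

/-- An `S(n)`-cover: an open cover such that every point lies in the `θⁿ`-interior of
some member. -/
def IsSnCover [TopologicalSpace X] (n : ℕ) (C : Set (Set X)) : Prop :=
  (∀ U ∈ C, IsOpen U) ∧ ⋃₀ C = Set.univ ∧ ∀ x : X, ∃ U ∈ C, x ∈ thetaInt n U

/-- Linearly Lindelöf: every uncountable subset of regular cardinality has a complete
accumulation point. -/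
def LinearlyLindelof (X : Type u) [TopologicalSpace X] : Prop :=
  ∀ F : Set X, ¬F.Countable → (#(↥F)).IsRegular →
    ∃ x : X, ∀ U : Set X, IsOpen U → x ∈ U → #(↥(F ∩ U)) = #(↥F)


set_option linter.unusedSectionVars false
set_option linter.unnecessarySimpa false
set_option linter.unusedVariables false

namespace P2aux


variable {X : Type u} [TopologicalSpace X]

/-- The extension space. -/
def Zc (F : Set X) : Type u := Option (X ⊕ (↥F × ↥F))

variable (F : Set X)

def ex (x : X) : Zc F := some (Sum.inl x)
def er (r : ↥F × ↥F) : Zc F := some (Sum.inr r)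
def qq : Zc F := none

@[simp] lemma ex_eq_ex {x y : X} : ex F x = ex F y ↔ x = y :=
  ⟨fun h => by injection h with h; injection h, fun h => by rw [h]⟩
@[simp] lemma ex_ne_er {x : X} {r : ↥F × ↥F} : ex F x ≠ er F r := by
  intro h; injection h with h; injection h
@[simp] lemma er_ne_ex {x : X} {r : ↥F × ↥F} : er F r ≠ ex F x := by
  intro h; injection h with h; injection h
@[simp] lemma ex_ne_qq {x : X} : ex F x ≠ qq F := by intro h; injection h
@[simp] lemma qq_ne_ex {x : X} : qq F ≠ ex F x := by intro h; injection h
@[simp] lemma er_ne_qq {r : ↥F × ↥F} : er F r ≠ qq F := by intro h; injection h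
@[simp] lemma qq_ne_er {r : ↥F × ↥F} : qq F ≠ er F r := by intro h; injection h
@[simp] lemma er_eq_er {r s : ↥F × ↥F} : er F r = er F s ↔ r = s :=
  ⟨fun h => by injection h with h; injection h, fun h => by rw [h]⟩

/-- Smallness of a set of indices. -/
def sm (s : Set ↥F) : Prop := #s < #F

variable {F}

lemma sm_mono {s t : Set ↥F} (h : s ⊆ t) (ht : sm F t) : sm F s :=
  lt_of_le_of_lt (Cardinal.mk_le_mk_of_subset h) ht

lemma aleph0_le (hF : F.Infinite) : ℵ₀ ≤ #F := by
  rw [Cardinal.aleph0_le_mk_iff]; exact Set.infinite_coe_iff.mpr hF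

lemma sm_empty (hF : F.Infinite) : sm F (∅ : Set ↥F) := by
  have : #(∅ : Set ↥F) = 0 := Cardinal.mk_emptyCollection _
  rw [sm, this]
  exact lt_of_lt_of_le Cardinal.aleph0_pos (aleph0_le hF)

lemma sm_union (hF : F.Infinite) {s t : Set ↥F} (hs : sm F s) (ht : sm F t) :
    sm F (s ∪ t) :=
  lt_of_le_of_lt (Cardinal.mk_union_le s t)
    (Cardinal.add_lt_of_lt (aleph0_le hF) hs ht)

lemma sm_singleton (hF : F.Infinite) (a : ↥F) : sm F ({a} : Set ↥F) := by
  rw [sm, Cardinal.mk_singleton]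
  exact lt_of_lt_of_le Cardinal.one_lt_aleph0 (aleph0_le hF)

lemma sm_subsingle (hF : F.Infinite) {s : Set ↥F} (a : ↥F) (h : s ⊆ {a}) : sm F s :=
  sm_mono h (sm_singleton hF a)

lemma exists_not_mem {E : Set ↥F} (hE : sm F E) : ∃ i : ↥F, i ∉ E := by
  by_contra h
  push_neg at h
  have hsub : (univ : Set ↥F) ⊆ E := fun i _ => h i
  have := Cardinal.mk_le_mk_of_subset hsub
  rw [Cardinal.mk_univ] at this
  exact absurd hE (not_lt.mpr this)

/-- transfer: the set of F-indices inside a set A of X has the cardinality of F ∩ A -/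
lemma sm_of_inter {A : Set X} (h : #(F ∩ A : Set X) < #F) :
    sm F {f : ↥F | (f : X) ∈ A} := by
  rw [sm]
  have e : {f : ↥F | (f : X) ∈ A} ≃ ↥(F ∩ A) :=
    { toFun := fun p => ⟨(p.1 : X), ⟨p.1.2, p.2⟩⟩
      invFun := fun p => ⟨⟨p.1, p.2.1⟩, p.2.2⟩
      left_inv := fun p => rfl
      right_inv := fun p => rfl }
  rw [Cardinal.mk_congr e]
  exact h


variable (F) in
/-- unconditional smallness (used to define the topology) -/
def smc (s : Set ↥F) : Prop := #s < ℵ₀ ⊔ #F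

lemma sm_to_smc {s : Set ↥F} (h : sm F s) : smc F s :=
  lt_of_lt_of_le h le_sup_right

lemma smc_iff_sm (hF : F.Infinite) {s : Set ↥F} : smc F s ↔ sm F s := by
  rw [smc, sm, sup_eq_right.mpr (aleph0_le hF)]

lemma smc_empty : smc F (∅ : Set ↥F) := by
  have : #(∅ : Set ↥F) = 0 := Cardinal.mk_emptyCollection _
  rw [smc, this]
  exact lt_of_lt_of_le Cardinal.aleph0_pos le_sup_left

lemma smc_union {s t : Set ↥F} (hs : smc F s) (ht : smc F t) : smc F (s ∪ t) :=
  lt_of_le_of_lt (Cardinal.mk_union_le s t)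
    (Cardinal.add_lt_of_lt le_sup_left hs ht)

lemma smc_mono {s t : Set ↥F} (h : s ⊆ t) (ht : smc F t) : smc F s :=
  lt_of_le_of_lt (Cardinal.mk_le_mk_of_subset h) ht

lemma smc_singleton (a : ↥F) : smc F ({a} : Set ↥F) := by
  rw [smc, Cardinal.mk_singleton]
  exact lt_of_lt_of_le Cardinal.one_lt_aleph0 le_sup_left

lemma smc_subsingle {s : Set ↥F} (a : ↥F) (h : s ⊆ {a}) : smc F s :=
  smc_mono h (smc_singleton a)

lemma exists_notMem_smc (hF : F.Infinite) {E : Set ↥F} (hE : smc F E) : ∃ i : ↥F, i ∉ E :=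
  exists_not_mem ((smc_iff_sm hF).mp hE)

variable (F)

/-- image of an X-set -/
def exs (U : Set X) : Set (Zc F) := ex F '' U

/-- mirror rows over a set of indices, with per-row exceptions -/
def mrf (Q : Set ↥F) (ε : ↥F → Set ↥F) : Set (Zc F) :=
  {z | ∃ f i, f ∈ Q ∧ i ∉ ε f ∧ z = er F (f, i)}

@[simp] lemma ex_mem_exs {x : X} {U : Set X} : ex F x ∈ exs F U ↔ x ∈ U := by
  simp only [exs, mem_image]
  constructor
  · rintro ⟨y, hy, h⟩; rwa [← (ex_eq_ex F).mp h]
  · intro h; exact ⟨x, h, rfl⟩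

@[simp] lemma er_notMem_exs {r : ↥F × ↥F} {U : Set X} : er F r ∉ exs F U := by
  rintro ⟨y, _, h⟩; exact (ex_ne_er F) h

@[simp] lemma qq_notMem_exs {U : Set X} : qq F ∉ exs F U := by
  rintro ⟨y, _, h⟩; exact (ex_ne_qq F) h

@[simp] lemma ex_notMem_mrf {x : X} {Q : Set ↥F} {ε : ↥F → Set ↥F} :
    ex F x ∉ mrf F Q ε := by
  rintro ⟨f, i, _, _, h⟩; exact (ex_ne_er F) h

@[simp] lemma qq_notMem_mrf {Q : Set ↥F} {ε : ↥F → Set ↥F} :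
    qq F ∉ mrf F Q ε := by
  rintro ⟨f, i, _, _, h⟩; exact (qq_ne_er F) h

@[simp] lemma er_mem_mrf {r : ↥F × ↥F} {Q : Set ↥F} {ε : ↥F → Set ↥F} :
    er F r ∈ mrf F Q ε ↔ r.1 ∈ Q ∧ r.2 ∉ ε r.1 := by
  constructor
  · rintro ⟨f, i, hf, hi, h⟩
    obtain rfl : r = (f, i) := (er_eq_er F).mp h
    exact ⟨hf, hi⟩
  · rintro ⟨hf, hi⟩; exact ⟨r.1, r.2, hf, hi, by simp⟩

/-- the row of a set S at index f -/
def Row (S : Set (Zc F)) (f : ↥F) : Set ↥F := {i | er F (f, i) ∈ S}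

/-- The topology on Zc. -/
def IsOp (O : Set (Zc F)) : Prop :=
  IsOpen {x : X | ex F x ∈ O} ∧
  (∀ f : ↥F, ex F (f : X) ∈ O → ∃ E, smc F E ∧ ∀ i, i ∉ E → er F (f, i) ∈ O) ∧
  (qq F ∈ O → ∃ B, smc F B ∧ ∀ f, f ∉ B → ∃ E, smc F E ∧ ∀ i, i ∉ E → er F (f, i) ∈ O)

variable {F}

instance Zc.topologicalSpace : TopologicalSpace (Zc F) where
  IsOpen := IsOp F
  isOpen_univ := by
    refine ⟨by simpa using isOpen_univ, fun f _ => ⟨∅, smc_empty, fun i _ => trivial⟩,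
      fun _ => ⟨∅, smc_empty, fun f _ => ⟨∅, smc_empty, fun i _ => trivial⟩⟩⟩
  isOpen_inter := by
    rintro O O' ⟨ha, hb, hc⟩ ⟨ha', hb', hc'⟩
    refine ⟨?_, ?_, ?_⟩
    · have : {x : X | ex F x ∈ O ∩ O'} = {x | ex F x ∈ O} ∩ {x | ex F x ∈ O'} := rfl
      rw [this]; exact ha.inter ha'
    · rintro f ⟨h1, h2⟩
      obtain ⟨E, hE, hrow⟩ := hb f h1
      obtain ⟨E', hE', hrow'⟩ := hb' f h2
      exact ⟨E ∪ E', smc_union hE hE',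
        fun i hi => ⟨hrow i (fun h => hi (Or.inl h)), hrow' i (fun h => hi (Or.inr h))⟩⟩
    · rintro ⟨h1, h2⟩
      obtain ⟨B, hB, hr⟩ := hc h1
      obtain ⟨B', hB', hr'⟩ := hc' h2
      refine ⟨B ∪ B', smc_union hB hB', fun f hf => ?_⟩
      obtain ⟨E, hE, hrow⟩ := hr f (fun h => hf (Or.inl h))
      obtain ⟨E', hE', hrow'⟩ := hr' f (fun h => hf (Or.inr h))
      exact ⟨E ∪ E', smc_union hE hE',
        fun i hi => ⟨hrow i (fun h => hi (Or.inl h)), hrow' i (fun h => hi (Or.inr h))⟩⟩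
  isOpen_sUnion := by
    intro 𝒮 h
    refine ⟨?_, ?_, ?_⟩
    · have : {x : X | ex F x ∈ ⋃₀ 𝒮} = ⋃ O ∈ 𝒮, {x | ex F x ∈ O} := by
        ext x; simp [mem_sUnion]
      rw [this]
      exact isOpen_biUnion (fun O hO => (h O hO).1)
    · rintro f ⟨O, hO, hf⟩
      obtain ⟨E, hE, hrow⟩ := (h O hO).2.1 f hf
      exact ⟨E, hE, fun i hi => ⟨O, hO, hrow i hi⟩⟩
    · rintro ⟨O, hO, hq⟩
      obtain ⟨B, hB, hr⟩ := (h O hO).2.2 hq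
      exact ⟨B, hB, fun f hf => by
        obtain ⟨E, hE, hrow⟩ := hr f hf
        exact ⟨E, hE, fun i hi => ⟨O, hO, hrow i hi⟩⟩⟩

lemma isOp_iff {O : Set (Zc F)} : IsOpen O ↔ IsOp F O := Iff.rfl

lemma trace_core {U : Set X} {Q : Set ↥F} {ε : ↥F → Set ↥F} :
    {x : X | ex F x ∈ exs F U ∪ mrf F Q ε} = U := by
  ext x
  simp only [mem_setOf_eq, mem_union, ex_mem_exs]
  exact ⟨fun h => h.elim id (fun h => absurd h (ex_notMem_mrf F)), Or.inl⟩

lemma isOpen_core {U : Set X} {Q : Set ↥F} {ε : ↥F → Set ↥F}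
    (hU : IsOpen U) (hQU : ∀ f : ↥F, (f : X) ∈ U → f ∈ Q)
    (hε : ∀ f ∈ Q, smc F (ε f)) :
    IsOpen (exs F U ∪ mrf F Q ε) := by
  rw [isOp_iff]
  refine ⟨by rwa [trace_core], ?_, ?_⟩
  · intro f hf
    rw [mem_union] at hf
    rcases hf with hf | hf
    · rw [ex_mem_exs] at hf
      have hfQ := hQU f hf
      exact ⟨ε f, hε f hfQ, fun i hi => Or.inr ((er_mem_mrf F).mpr ⟨hfQ, hi⟩)⟩
    · exact absurd hf (ex_notMem_mrf F)
  · intro hq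
    rcases hq with hq | hq
    · exact absurd hq (qq_notMem_exs F)
    · exact absurd hq (qq_notMem_mrf F)

lemma isOpen_qcore {U : Set X} {Q : Set ↥F} {ε : ↥F → Set ↥F}
    (hU : IsOpen U) (hQU : ∀ f : ↥F, (f : X) ∈ U → f ∈ Q)
    (hε : ∀ f ∈ Q, smc F (ε f)) (hB : smc F Qᶜ) :
    IsOpen ({qq F} ∪ (exs F U ∪ mrf F Q ε)) := by
  rw [isOp_iff]
  have hcore := isOpen_core hU hQU hε
  refine ⟨?_, ?_, ?_⟩
  · have : {x : X | ex F x ∈ {qq F} ∪ (exs F U ∪ mrf F Q ε)} = U := by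
      ext x
      simp only [mem_setOf_eq, mem_union, mem_singleton_iff]
      constructor
      · rintro (h | h)
        · exact absurd h (ex_ne_qq F)
        · have := trace_core (F := F) (U := U) (Q := Q) (ε := ε)
          exact (Set.ext_iff.mp this x).mp h
      · intro h; exact Or.inr (Or.inl ((ex_mem_exs F).mpr h))
    rwa [this]
  · intro f hf
    rcases hf with hf | hf
    · exact absurd hf (ex_ne_qq F)
    · obtain ⟨E, hE, hrow⟩ := (isOp_iff.mp hcore).2.1 f hf
      exact ⟨E, hE, fun i hi => Or.inr (hrow i hi)⟩
  · intro _
    refine ⟨Qᶜ, hB, fun f hf => ?_⟩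
    rw [Set.notMem_compl_iff] at hf
    exact ⟨ε f, hε f hf, fun i hi => Or.inr (Or.inr ((er_mem_mrf F).mpr ⟨hf, hi⟩))⟩

lemma isOpen_er_singleton {r : ↥F × ↥F} : IsOpen ({er F r} : Set (Zc F)) := by
  rw [isOp_iff]
  refine ⟨?_, ?_, ?_⟩
  · have : {x : X | ex F x ∈ ({er F r} : Set (Zc F))} = ∅ := by
      ext x; simp only [mem_setOf_eq, mem_singleton_iff, mem_empty_iff_false, iff_false]
      exact ex_ne_er F
    rw [this]; exact isOpen_empty
  · intro f hf; exact absurd hf (ex_ne_er F)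
  · intro hq; exact absurd hq (qq_ne_er F)

/-- trace of a set on X -/
def SX (S : Set (Zc F)) : Set X := {x | ex F x ∈ S}
/-- points of X below a big row of S -/
def BX (S : Set (Zc F)) : Set X := {x | ∃ f : ↥F, (f : X) = x ∧ ¬ smc F (Row F S f)}
/-- indices with big rows -/
def B0 (S : Set (Zc F)) : Set ↥F := {f | ¬ smc F (Row F S f)}

lemma m5x {S : Set (Zc F)} {x : X} (h : ex F x ∈ closure S) :
    x ∈ closure (SX S ∪ BX S) := by
  by_contra hx
  set U := (closure (SX S ∪ BX S))ᶜ with hUdef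
  have hUopen : IsOpen U := isClosed_closure.isOpen_compl
  have hxU : x ∈ U := hx
  have hsm : ∀ f : ↥F, (f : X) ∈ U → smc F (Row F S f) := by
    intro f hf
    by_contra hbig
    exact hf (subset_closure (Or.inr ⟨f, rfl, hbig⟩))
  set O : Set (Zc F) := exs F U ∪ mrf F {f : ↥F | (f : X) ∈ U} (fun f => Row F S f) with hO
  have hOopen : IsOpen O := isOpen_core hUopen (fun f hf => hf) (fun f hf => hsm f hf)
  have hxO : ex F x ∈ O := Or.inl ((ex_mem_exs F).mpr hxU)
  obtain ⟨w, hwO, hwS⟩ := mem_closure_iff.mp h O hOopen hxO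
  rcases hwO with hw | hw
  · obtain ⟨x', hx', rfl⟩ := hw
    exact hx' (subset_closure (Or.inl hwS))
  · obtain ⟨f, i, hf, hi, rfl⟩ := hw
    exact hi hwS

lemma m5r {S : Set (Zc F)} {r : ↥F × ↥F} (h : er F r ∈ closure S) : er F r ∈ S := by
  obtain ⟨w, hwO, hwS⟩ := mem_closure_iff.mp h {er F r} isOpen_er_singleton rfl
  rwa [mem_singleton_iff.mp hwO] at hwS

lemma m5q {S : Set (Zc F)} (h : qq F ∈ closure S) :
    qq F ∈ S ∨ ¬ smc F (B0 S) := by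
  by_contra hc
  push_neg at hc
  obtain ⟨hqS, hB0⟩ := hc
  set O : Set (Zc F) := {qq F} ∪ (exs F ∅ ∪ mrf F (B0 S)ᶜ (fun f => Row F S f)) with hO
  have hOopen : IsOpen O := by
    refine isOpen_qcore isOpen_empty (fun f hf => absurd hf (notMem_empty _)) ?_ ?_
    · intro f hf
      rw [mem_compl_iff, B0, mem_setOf_eq, not_not] at hf
      exact hf
    · rwa [compl_compl]
  have hqO : qq F ∈ O := Or.inl rfl
  obtain ⟨w, hwO, hwS⟩ := mem_closure_iff.mp h O hOopen hqO
  rcases hwO with hw | hw | hw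
  · rw [mem_singleton_iff.mp hw] at hwS; exact hqS hwS
  · exact absurd hw (by simp [exs])
  · obtain ⟨f, i, _, hi, rfl⟩ := hw
    exact hi hwS

/-- master case analysis for closures in Zc -/
lemma clZ_cases {S : Set (Zc F)} {z : Zc F} (hz : z ∈ closure S) :
    (∃ x : X, z = ex F x ∧ x ∈ closure (SX S ∪ BX S)) ∨ z ∈ S ∨
      (z = qq F ∧ ¬ smc F (B0 S)) := by
  obtain _ | (x | r) := z
  · rcases m5q (S := S) hz with h | h
    · exact Or.inr (Or.inl h)
    · exact Or.inr (Or.inr ⟨rfl, h⟩)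
  · exact Or.inl ⟨x, rfl, m5x hz⟩
  · exact Or.inr (Or.inl (m5r hz))

/-- adherence of the base point of a row -/
lemma mem_closure_row (hF : F.Infinite) {S : Set (Zc F)} (f : ↥F) (E : Set ↥F)
    (hE : smc F E) (hrow : ∀ i, i ∉ E → er F (f, i) ∈ S) :
    ex F (f : X) ∈ closure S := by
  rw [mem_closure_iff]
  intro O hO hfO
  obtain ⟨E', hE', hrow'⟩ := (isOp_iff.mp hO).2.1 f hfO
  obtain ⟨i, hi⟩ := exists_notMem_smc hF (smc_union hE hE')
  exact ⟨er F (f, i), hrow' i (fun h => hi (Or.inr h)), hrow i (fun h => hi (Or.inl h))⟩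

/-- row computations -/
lemma row_core {A : Set X} {Q : Set ↥F} {ε : ↥F → Set ↥F} (f : ↥F) :
    Row F (exs F A ∪ mrf F Q ε) f = {i | f ∈ Q ∧ i ∉ ε f} := by
  ext i
  simp only [Row, mem_setOf_eq, mem_union, er_mem_mrf]
  constructor
  · rintro (h | h)
    · exact absurd h (er_notMem_exs F)
    · exact h
  · exact Or.inr

lemma b0_core {A : Set X} {Q : Set ↥F} {ε : ↥F → Set ↥F} :
    B0 (exs F A ∪ mrf F Q ε) ⊆ Q := by
  intro f hf
  rw [B0, mem_setOf_eq, row_core] at hf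
  by_contra hfQ
  apply hf
  have : {i : ↥F | f ∈ Q ∧ i ∉ ε f} = ∅ := by
    ext i; simp only [mem_setOf_eq, mem_empty_iff_false, iff_false, not_and]
    intro h; exact absurd h hfQ
  rw [this]; exact smc_empty

lemma bx_core {A : Set X} {Q : Set ↥F} {ε : ↥F → Set ↥F} :
    BX (exs F A ∪ mrf F Q ε) ⊆ {x : X | ∃ f : ↥F, (f : X) = x ∧ f ∈ Q} := by
  rintro x ⟨f, rfl, hf⟩
  exact ⟨f, rfl, b0_core hf⟩

lemma sx_core {A : Set X} {Q : Set ↥F} {ε : ↥F → Set ↥F} :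
    SX (exs F A ∪ mrf F Q ε) = A := trace_core

lemma chain_mono {n : ℕ} {A : ℕ → Set X}
    (hcl : ∀ i, i + 1 < n → closure (A i) ⊆ A (i + 1)) :
    ∀ i j, i ≤ j → j < n → A i ⊆ A j := by
  intro i j hij hjn
  induction j with
  | zero => obtain rfl : i = 0 := Nat.le_zero.mp hij; exact subset_rfl
  | succ j ih =>
    rcases Nat.lt_or_ge i (j+1) with h | h
    · have h1 : A i ⊆ A j := ih (Nat.lt_succ_iff.mp h) (by omega)
      exact h1.trans (subset_closure.trans (hcl j hjn))
    · obtain rfl : i = j + 1 := by omega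
      exact subset_rfl

lemma SX_qq_union {T : Set (Zc F)} : SX ({qq F} ∪ T) = SX T := by
  ext x
  simp only [SX, mem_setOf_eq, mem_union, mem_singleton_iff]
  exact ⟨fun h => h.elim (fun h => absurd h (ex_ne_qq F)) id, Or.inr⟩

lemma Row_qq_union {T : Set (Zc F)} (f : ↥F) : Row F ({qq F} ∪ T) f = Row F T f := by
  ext i
  simp only [Row, mem_setOf_eq, mem_union, mem_singleton_iff]
  exact ⟨fun h => h.elim (fun h => absurd h (er_ne_qq F)) id, Or.inr⟩

lemma BX_qq_union {T : Set (Zc F)} : BX ({qq F} ∪ T) = BX T := by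
  ext x
  simp only [BX, mem_setOf_eq, Row_qq_union]

lemma B0_qq_union {T : Set (Zc F)} : B0 ({qq F} ∪ T) = B0 T := by
  ext f
  simp only [B0, mem_setOf_eq, Row_qq_union]

/-- the lifted chain -/
def LL (A : ℕ → Set X) (ε : ↥F → Set ↥F) (i : ℕ) : Set (Zc F) :=
  exs F (A i) ∪ mrf F {f : ↥F | (f : X) ∈ A i} ε

lemma sx_LL {A : ℕ → Set X} {ε : ↥F → Set ↥F} {i : ℕ} : SX (LL A ε i) = A i := sx_core

lemma bx_LL {A : ℕ → Set X} {ε : ↥F → Set ↥F} {i : ℕ} :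
    BX (LL A ε i) ⊆ {x : X | ∃ f : ↥F, (f : X) = x ∧ f ∈ {f : ↥F | (f : X) ∈ A i}} := bx_core

lemma lift_chain (hF : F.Infinite) {n : ℕ} (hn : 0 < n) (A : ℕ → Set X) (x : X)
    (ε : ↥F → Set ↥F)
    (hop : ∀ i, i < n → IsOpen (A i) ∧ x ∈ A i)
    (hcl : ∀ i, i + 1 < n → closure (A i) ⊆ A (i + 1))
    (hsm : sm F {f : ↥F | (f : X) ∈ A (n - 1)})
    (hε : ∀ f, smc F (ε f)) :
    IsNHull n (ex F x) (LL A ε (n - 1)) ∧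
      closure (LL A ε (n - 1)) ⊆
        exs F (closure (A (n - 1))) ∪ mrf F {f : ↥F | (f : X) ∈ A (n - 1)} ε := by
  have hmono : ∀ i, i < n → A i ⊆ A (n - 1) := by
    intro i hi
    exact chain_mono hcl i (n - 1) (by omega) (by omega)
  have hsmall : ∀ i, i < n → smc F {f : ↥F | (f : X) ∈ A i} := by
    intro i hi
    exact smc_mono (fun f hf => hmono i hi hf) (sm_to_smc hsm)
  have hopen : ∀ i, i < n → IsOpen (LL A ε i) := by
    intro i hi
    exact isOpen_core (hop i hi).1 (fun f hf => hf) (fun f _ => hε f)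
  have hmem : ∀ i, i < n → ex F x ∈ LL A ε i := by
    intro i hi
    exact Or.inl ((ex_mem_exs F).mpr (hop i hi).2)
  have hclosure : ∀ i, i < n →
      closure (LL A ε i) ⊆
        exs F (closure (A i)) ∪ mrf F {f : ↥F | (f : X) ∈ A i} ε := by
    intro i hi z hz
    rcases clZ_cases hz with ⟨x', rfl, hx'⟩ | hz' | ⟨rfl, hq⟩
    · refine Or.inl ((ex_mem_exs F).mpr ?_)
      refine closure_mono ?_ hx'
      intro w hw
      rcases hw with hw | hw
      · rwa [sx_LL] at hw
      · obtain ⟨f, rfl, hf⟩ := bx_LL hw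
        exact hf
    · rcases hz' with hz' | hz'
      · obtain ⟨x', hx', rfl⟩ := hz'
        exact Or.inl ((ex_mem_exs F).mpr (subset_closure hx'))
      · exact Or.inr hz'
    · exfalso
      have hb0 : B0 (LL A ε i) ⊆ {f : ↥F | (f : X) ∈ A i} := b0_core
      exact hq (smc_mono hb0 (hsmall i hi))
  constructor
  · refine ⟨LL A ε, fun i hi => ⟨hopen i hi, hmem i hi⟩, ?_, rfl⟩
    intro i hi z hz
    rcases hclosure i (by omega) hz with h | h
    · obtain ⟨x', hx', rfl⟩ := h
      exact Or.inl ((ex_mem_exs F).mpr (hcl i hi hx'))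
    · obtain ⟨f, i', hf, hi', rfl⟩ := h
      exact Or.inr ⟨f, i', chain_mono hcl i (i + 1) (by omega) hi hf, hi', rfl⟩
  · exact hclosure (n - 1) (by omega)



lemma row_er_singleton {r₀ : ↥F × ↥F} (f : ↥F) :
    Row F ({er F r₀} : Set (Zc F)) f ⊆ {r₀.2} := by
  intro i hi
  rw [Row, mem_setOf_eq, mem_singleton_iff] at hi
  have h := (er_eq_er F).mp hi
  rw [mem_singleton_iff]
  exact congrArg Prod.snd h

lemma closure_er_singleton (hF : F.Infinite) {r₀ : ↥F × ↥F} :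
    closure ({er F r₀} : Set (Zc F)) = {er F r₀} := by
  refine subset_antisymm ?_ subset_closure
  intro z hz
  rcases clZ_cases hz with ⟨x, rfl, hx⟩ | hz' | ⟨rfl, hq⟩
  · exfalso
    have h1 : SX ({er F r₀} : Set (Zc F)) ∪ BX ({er F r₀} : Set (Zc F)) = ∅ := by
      refine eq_empty_iff_forall_notMem.mpr ?_
      rintro x' (hx' | hx')
      · exact (ex_ne_er F) (mem_singleton_iff.mp hx')
      · obtain ⟨f, _, hbig⟩ := hx'
        exact hbig (smc_subsingle r₀.2 (row_er_singleton f))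
    rw [h1, closure_empty] at hx
    exact hx
  · exact hz'
  · exfalso
    apply hq
    have : B0 ({er F r₀} : Set (Zc F)) = ∅ := by
      ext f
      simp only [B0, mem_setOf_eq, mem_empty_iff_false, iff_false, not_not]
      exact smc_subsingle r₀.2 (row_er_singleton f)
    rw [this]
    exact smc_empty

lemma rHull (hF : F.Infinite) {n : ℕ} (hn : 0 < n) (r₀ : ↥F × ↥F) :
    IsNHull n (er F r₀) ({er F r₀} : Set (Zc F)) := by
  refine ⟨fun _ => {er F r₀}, fun i _ => ⟨isOpen_er_singleton, rfl⟩, ?_, rfl⟩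
  intro i _
  rw [closure_er_singleton hF]

lemma qHull (hF : F.Infinite) {n : ℕ} (hn : 0 < n) (W : ℕ → Set X) (x₀ : X)
    (hop : ∀ i, i < n → IsOpen (W i) ∧ x₀ ∈ W i)
    (hcl : ∀ i, i + 1 < n → closure (W i) ⊆ W (i + 1))
    (hsm : sm F {f : ↥F | (f : X) ∈ W (n - 1)}) :
    ∃ O : Set (Zc F), IsNHull n (qq F) O ∧ ex F x₀ ∉ closure O := by
  set G : ℕ → Set X := fun j => if j = 0 then ∅ else (closure (W (n - 1 - j)))ᶜ with hGdef
  set Q : ℕ → Set ↥F :=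
    fun j => {f : ↥F | (f : X) ∉ W (n - 1) ∨ (f : X) ∈ G j} with hQdef
  set Oc : ℕ → Set (Zc F) :=
    fun j => {qq F} ∪ (exs F (G j) ∪ mrf F (Q j) (fun _ => ∅)) with hOdef
  have hWmono : ∀ i j, i ≤ j → j < n → W i ⊆ W j := chain_mono hcl
  have hGopen : ∀ j, IsOpen (G j) := by
    intro j
    rw [hGdef]
    by_cases h : j = 0
    · simp [h]
    · simp only [h, if_false]
      exact isClosed_closure.isOpen_compl
  have hGW : ∀ j, G j ⊆ (W (n - 1 - j))ᶜ := by
    intro j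
    rw [hGdef]
    by_cases h : j = 0
    · simp [h]
    · simp only [h, if_false]
      exact compl_subset_compl.mpr subset_closure
  have hGmono : ∀ j, j + 1 < n → G j ⊆ G (j + 1) := by
    intro j hj
    rw [hGdef]
    by_cases h : j = 0
    · simp [h]
    · simp only [h, if_false, Nat.succ_ne_zero]
      exact compl_subset_compl.mpr
        (closure_mono (hWmono (n - 1 - (j + 1)) (n - 1 - j) (by omega) (by omega)))
  have hkey : ∀ j, j < n → closure (G j ∪ (W (n - 1))ᶜ) ⊆ (W (n - 1 - j))ᶜ := by
    intro j hj
    refine closure_minimal ?_ (hop (n - 1 - j) (by omega)).1.isClosed_compl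
    refine union_subset (hGW j) ?_
    exact compl_subset_compl.mpr (hWmono (n - 1 - j) (n - 1) (by omega) (by omega))
  have hGstep : ∀ j, j + 1 < n → (W (n - 1 - j))ᶜ ⊆ G (j + 1) := by
    intro j hj
    rw [hGdef]
    simp only [Nat.succ_ne_zero, if_false]
    refine compl_subset_compl.mpr ?_
    have heq : (n - 1 - (j + 1)) + 1 = n - 1 - j := by omega
    have := hcl (n - 1 - (j + 1)) (by omega)
    rw [heq] at this
    exact this
  have hQmono : ∀ j, j + 1 < n → Q j ⊆ Q (j + 1) := by
    intro j hj f hf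
    rcases hf with hf | hf
    · exact Or.inl hf
    · exact Or.inr (hGmono j hj hf)
  have hQc : ∀ j, smc F (Q j)ᶜ := by
    intro j
    refine smc_mono ?_ (sm_to_smc hsm)
    intro f hf
    rw [mem_compl_iff, hQdef] at hf
    simp only [mem_setOf_eq, not_or, not_not] at hf
    exact hf.1
  have hOopen : ∀ j, IsOpen (Oc j) := by
    intro j
    exact isOpen_qcore (hGopen j) (fun f hf => Or.inr hf) (fun f _ => smc_empty) (hQc j)
  have hOmem : ∀ j, qq F ∈ Oc j := fun j => Or.inl rfl
  have hBXbound : ∀ j, SX (Oc j) ∪ BX (Oc j) ⊆ G j ∪ (W (n - 1))ᶜ := by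
    intro j w hw
    rcases hw with hw | hw
    · rw [hOdef] at hw
      rw [SX_qq_union, sx_core] at hw
      exact Or.inl hw
    · rw [hOdef] at hw
      rw [BX_qq_union] at hw
      obtain ⟨f, rfl, hf⟩ := bx_core hw
      rcases hf with hf | hf
      · exact Or.inr hf
      · exact Or.inl hf
  have hOcl : ∀ j, j < n → ∀ z ∈ closure (Oc j),
      (∃ x : X, z = ex F x ∧ x ∈ (W (n - 1 - j))ᶜ) ∨ z ∈ Oc j := by
    intro j hj z hz
    rcases clZ_cases hz with ⟨x, rfl, hx⟩ | hz' | ⟨rfl, _⟩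
    · refine Or.inl ⟨x, rfl, ?_⟩
      exact hkey j hj (closure_mono (hBXbound j) hx)
    · exact Or.inr hz'
    · exact Or.inr (hOmem j)
  refine ⟨Oc (n - 1), ⟨Oc, fun j hj => ⟨hOopen j, hOmem j⟩, ?_, rfl⟩, ?_⟩
  · intro j hj z hz
    rcases hOcl j (by omega) z hz with ⟨x, rfl, hx⟩ | hz'
    · exact Or.inr (Or.inl ((ex_mem_exs F).mpr (hGstep j hj hx)))
    · rcases hz' with h | h | h
      · exact Or.inl h
      · obtain ⟨x, hx, rfl⟩ := h
        exact Or.inr (Or.inl ((ex_mem_exs F).mpr (hGmono j hj hx)))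
      · obtain ⟨f, i, hf, hi, rfl⟩ := h
        exact Or.inr (Or.inr ⟨f, i, hQmono j hj hf, hi, rfl⟩)
  · intro hcon
    have h0 : (n - 1 - (n - 1)) = 0 := by omega
    rcases hOcl (n - 1) (by omega) _ hcon with ⟨x, hx, hxmem⟩ | hz'
    · rw [ex_eq_ex] at hx
      subst hx
      rw [h0] at hxmem
      exact hxmem (hop 0 (by omega)).2
    · rcases hz' with h | h | h
      · exact (ex_ne_qq F) h
      · have hx₀ : x₀ ∈ G (n - 1) := (ex_mem_exs F).mp h
        have := hGW (n - 1) hx₀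
        rw [h0] at this
        exact this (hop 0 (by omega)).2
      · obtain ⟨f, i, _, _, heq⟩ := h
        exact (ex_ne_er F) heq

lemma qHullR (hF : F.Infinite) {n : ℕ} (hn : 0 < n) (r₀ : ↥F × ↥F) :
    ∃ O : Set (Zc F), IsNHull n (qq F) O ∧ er F r₀ ∉ closure O := by
  set ε₀ : ↥F → Set ↥F := fun f => {i | (f, i) = r₀} with hε₀def
  have hε₀ : ∀ f, smc F (ε₀ f) := by
    intro f
    refine smc_subsingle r₀.2 ?_
    intro i hi
    rw [hε₀def, mem_setOf_eq] at hi
    rw [mem_singleton_iff]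
    exact congrArg Prod.snd hi
  set O0 : Set (Zc F) := {qq F} ∪ (exs F ∅ ∪ mrf F (Set.univ : Set ↥F) ε₀) with hO0def
  set Occ : Set (Zc F) := {er F r₀}ᶜ with hOcdef
  have hO0open : IsOpen O0 := by
    refine isOpen_qcore isOpen_empty (fun f hf => absurd hf (notMem_empty _))
      (fun f _ => hε₀ f) ?_
    rw [compl_univ]
    exact smc_empty
  have hOcopen : IsOpen Occ := by
    rw [isOp_iff]
    refine ⟨?_, ?_, ?_⟩
    · have : {x : X | ex F x ∈ Occ} = (Set.univ : Set X) := by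
        ext x
        simp only [mem_setOf_eq, mem_univ, iff_true, hOcdef, mem_compl_iff,
          mem_singleton_iff]
        exact ex_ne_er F
      rw [this]
      exact isOpen_univ
    · intro f _
      refine ⟨{r₀.2}, smc_singleton r₀.2, fun i hi => ?_⟩
      rw [hOcdef, mem_compl_iff, mem_singleton_iff]
      intro h
      exact hi (mem_singleton_iff.mpr (congrArg Prod.snd ((er_eq_er F).mp h)))
    · intro _
      refine ⟨∅, smc_empty, fun f _ => ⟨{r₀.2}, smc_singleton r₀.2, fun i hi => ?_⟩⟩
      rw [hOcdef, mem_compl_iff, mem_singleton_iff]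
      intro h
      exact hi (mem_singleton_iff.mpr (congrArg Prod.snd ((er_eq_er F).mp h)))
  have hr₀O0 : er F r₀ ∉ O0 := by
    rintro (h | h | h)
    · exact (er_ne_qq F) h
    · exact (er_notMem_exs F) h
    · rw [er_mem_mrf] at h
      exact h.2 rfl
  have hr₀Oc : er F r₀ ∉ Occ := by
    rw [hOcdef, mem_compl_iff, not_not]
    rfl
  set Us : ℕ → Set (Zc F) := fun j => if j = 0 then O0 else Occ with hUsdef
  have hUs0 : Us 0 = O0 := by rw [hUsdef]; simp
  have hUss : ∀ j, j ≠ 0 → Us j = Occ := by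
    intro j h
    rw [hUsdef]
    simp [h]
  have hUsopen : ∀ j, IsOpen (Us j) := by
    intro j
    by_cases h : j = 0
    · rw [h, hUs0]; exact hO0open
    · rw [hUss j h]; exact hOcopen
  have hUsmem : ∀ j, qq F ∈ Us j := by
    intro j
    by_cases h : j = 0
    · rw [h, hUs0]; exact Or.inl rfl
    · rw [hUss j h]
      exact fun hc => (qq_ne_er F) (mem_singleton_iff.mp hc)
  have hr₀Us : ∀ j, er F r₀ ∉ Us j := by
    intro j
    by_cases h : j = 0
    · rw [h, hUs0]; exact hr₀O0
    · rw [hUss j h]; exact hr₀Oc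
  have hclUs : ∀ j, er F r₀ ∉ closure (Us j) := by
    intro j hc
    exact hr₀Us j (m5r hc)
  refine ⟨Us (n - 1), ⟨Us, fun j hj => ⟨hUsopen j, hUsmem j⟩, ?_, rfl⟩, hclUs (n - 1)⟩
  intro j hj z hz
  have hz' : z ≠ er F r₀ := by
    intro h
    subst h
    exact hclUs j hz
  rw [hUss (j+1) (Nat.succ_ne_zero j), hOcdef, mem_compl_iff, mem_singleton_iff]
  exact hz'


lemma notMem_thetaCl {Y : Type u} [TopologicalSpace Y] {n : ℕ} (hn : 0 < n) {z t : Y}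
    {U : Set Y} (hU : IsNHull n z U) (ht : t ∉ closure U) : z ∉ thetaCl n {t} := by
  obtain ⟨m, rfl⟩ : ∃ m, n = m + 1 := ⟨n - 1, by omega⟩
  intro hz
  simp only [thetaCl, mem_setOf_eq] at hz
  obtain ⟨w, hw1, hw2⟩ := hz U hU
  rw [mem_singleton_iff] at hw2
  subst hw2
  exact ht hw1

lemma snZ (hF : F.Infinite) {n : ℕ} (hn : 0 < n) (hS : IsSnSpace n X)
    (W : X → ℕ → Set X)
    (hWop : ∀ x, ∀ i, i < n → IsOpen (W x i) ∧ x ∈ W x i)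
    (hWcl : ∀ x, ∀ i, i + 1 < n → closure (W x i) ⊆ W x (i + 1))
    (hWsm : ∀ x, sm F {f : ↥F | (f : X) ∈ W x (n - 1)}) :
    IsSnSpace n (Zc F) := by
  obtain ⟨m, rfl⟩ : ∃ m, n = m + 1 := ⟨n - 1, by omega⟩
  intro z w hzw
  obtain _ | (x | r) := z
  · -- z = qq
    obtain _ | (y | s) := w
    · exact absurd rfl hzw
    · obtain ⟨O, hO, hesc⟩ :=
        qHull hF (by omega) (W y) y (hWop y) (hWcl y) (hWsm y)
      exact notMem_thetaCl (by omega) hO hesc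
    · obtain ⟨O, hO, hesc⟩ := qHullR hF (F := F) (n := m + 1) (Nat.succ_pos m) s
      exact notMem_thetaCl (by omega) hO hesc
  · -- z = ex x
    obtain _ | (y | s) := w
    · -- w = qq
      have hlift := lift_chain hF (by omega) (W x) x (fun _ => ∅)
        (hWop x) (hWcl x) (hWsm x) (fun f => smc_empty)
      refine notMem_thetaCl (by omega) hlift.1 ?_
      intro hc
      rcases hlift.2 hc with h | h
      · exact qq_notMem_exs F h
      · exact qq_notMem_mrf F h
    · -- w = ex y
      have hxy : x ≠ y := fun h => hzw (by rw [h])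
      have hsep := hS x y hxy
      simp only [thetaCl, mem_setOf_eq] at hsep
      push_neg at hsep
      obtain ⟨U, hU, hne⟩ := hsep
      have hy : y ∉ closure U := fun hy =>
        (eq_empty_iff_forall_notMem.mp hne y) ⟨hy, rfl⟩
      obtain ⟨Us, hU1, hU2, hU3⟩ := hU
      set A : ℕ → Set X := fun i => Us i ∩ W x i with hAdef
      have hAop : ∀ i, i < m + 1 → IsOpen (A i) ∧ x ∈ A i := fun i hi =>
        ⟨((hU1 i hi).1).inter (hWop x i hi).1, ⟨(hU1 i hi).2, (hWop x i hi).2⟩⟩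
      have hAcl : ∀ i, i + 1 < m + 1 → closure (A i) ⊆ A (i + 1) := by
        intro i hi w' hw'
        exact ⟨hU2 i hi (closure_mono inter_subset_left hw'),
          hWcl x i hi (closure_mono inter_subset_right hw')⟩
      have hAsm : sm F {f : ↥F | (f : X) ∈ A (m + 1 - 1)} :=
        sm_mono (fun f hf => hf.2) (hWsm x)
      have hlift := lift_chain hF (by omega) A x (fun _ => ∅) hAop hAcl hAsm
        (fun f => smc_empty)
      refine notMem_thetaCl (by omega) hlift.1 ?_
      intro hc
      rcases hlift.2 hc with h | h
      · have hy' : y ∈ closure (A (m + 1 - 1)) := (ex_mem_exs F).mp h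
        have : y ∈ closure U := by
          rw [← hU3]
          exact closure_mono inter_subset_left hy'
        exact hy this
      · exact ex_notMem_mrf F h
    · -- w = er s
      have hlift := lift_chain hF (by omega) (W x) x (fun _ => ({s.2} : Set ↥F))
        (hWop x) (hWcl x) (hWsm x) (fun f => smc_singleton s.2)
      refine notMem_thetaCl (by omega) hlift.1 ?_
      intro hc
      rcases hlift.2 hc with h | h
      · exact er_notMem_exs F h
      · exact ((er_mem_mrf F).mp h).2 rfl
  · -- z = er r
    have hrH := rHull hF (F := F) (n := m + 1) (Nat.succ_pos m) r
    refine notMem_thetaCl (by omega) hrH ?_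
    rw [closure_er_singleton hF]
    intro hw
    exact hzw (mem_singleton_iff.mp hw).symm

lemma embed : Topology.IsEmbedding (ex F) := by
  refine ⟨⟨?_⟩, fun a b h => (ex_eq_ex F).mp h⟩
  rw [TopologicalSpace.ext_iff]
  intro U
  rw [isOpen_induced_iff]
  constructor
  · intro hU
    refine ⟨exs F U ∪ mrf F {f : ↥F | (f : X) ∈ U} (fun _ => ∅),
      isOpen_core hU (fun f hf => hf) (fun f _ => smc_empty), ?_⟩
    ext x
    simp only [mem_preimage]
    exact (Set.ext_iff.mp (trace_core (F := F)) x)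
  · rintro ⟨O, hO, rfl⟩
    exact (isOp_iff.mp hO).1

lemma q_theta (hF : F.Infinite) : qq F ∈ thetaCl 1 (Set.range (ex F)) := by
  simp only [thetaCl, mem_setOf_eq]
  intro U hU
  obtain ⟨Us, hprops, _, htop⟩ := hU
  have hU0 : IsOpen (Us 0) ∧ qq F ∈ Us 0 := hprops 0 (by omega)
  have htop0 : Us 0 = U := htop
  obtain ⟨B, hB, hrow⟩ := (isOp_iff.mp hU0.1).2.2 hU0.2
  obtain ⟨f, hf⟩ := exists_notMem_smc hF hB
  obtain ⟨E, hE, hr⟩ := hrow f hf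
  have hcl : ex F (f : X) ∈ closure (Us 0) :=
    mem_closure_row hF f E hE (fun i hi => hr i hi)
  rw [htop0] at hcl
  exact ⟨ex F (f : X), hcl, mem_range_self _⟩

end P2aux

/-- P2: For `n ≥ 1`, every `S(n)`-θ-closed `S(n)`-space is weakly
`S(n)`-θ-closed. -/
theorem snThetaClosed_weaklySnThetaClosed (n : ℕ) (hn : 1 ≤ n)
    (X : Type u) [TopologicalSpace X] (hS : IsSnSpace n X)
    (h : IsSnThetaClosedSpace n X) : WeaklySnThetaClosed n X := by
  intro F hFinf hFreg
  by_contra hno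
  push_neg at hno
  have hbad : ∀ x : X, ∃ Ws : ℕ → Set X,
      (∀ i, i < n → IsOpen (Ws i) ∧ x ∈ Ws i) ∧
      (∀ i, i + 1 < n → closure (Ws i) ⊆ Ws (i + 1)) ∧
      P2aux.sm F {f : ↥F | (f : X) ∈ Ws (n - 1)} := by
    intro x
    have hx := hno x
    simp only [IsThetaZeroCompleteAccPt] at hx
    push_neg at hx
    obtain ⟨U, hU, hne⟩ := hx
    obtain ⟨Us, h1, h2, h3⟩ := hU
    refine ⟨Us, fun i hi => h1 i hi, h2, ?_⟩
    apply P2aux.sm_of_inter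
    rw [h3]
    exact lt_of_le_of_ne (Cardinal.mk_le_mk_of_subset inter_subset_left) hne
  choose W hWop hWcl hWsm using hbad
  have hsnZ : IsSnSpace n (P2aux.Zc F) :=
    P2aux.snZ hFinf (by omega) hS W hWop hWcl hWsm
  have hemb : Topology.IsEmbedding (P2aux.ex F) := P2aux.embed
  have hclosed := h (P2aux.Zc F) hsnZ (P2aux.ex F) hemb
  rw [IsThetaClosed] at hclosed
  have hq : P2aux.qq F ∈ thetaCl 1 (Set.range (P2aux.ex F)) := P2aux.q_theta hFinf
  rw [hclosed] at hq
  obtain ⟨x, hx⟩ := hq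
  exact (P2aux.ex_ne_qq F) hx
end

section
/- (P3) Let n ≥ 1. Every S(n)-closed S(n)-space is weakly S(n)-closed: every infinite subset of regular cardinality has a θ(n)-complete accumulation point. -/
open Set Topology Filter Cardinal

universe u

variable {X : Type u}

section AuxP3

variable [TopologicalSpace X]

lemma hull_le' {n : ℕ} {Ws : ℕ → Set X}
    (hc : ∀ i, i + 1 < n → closure (Ws i) ⊆ Ws (i + 1)) :
    ∀ i k, i + k < n → Ws i ⊆ Ws (i + k) := by
  intro i k
  induction k with
  | zero => intro _; exact subset_rfl
  | succ k ih =>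
    intro hk
    exact (ih (by omega)).trans (subset_closure.trans (hc (i + k) (by omega)))

lemma hull_le {n : ℕ} {Ws : ℕ → Set X}
    (hc : ∀ i, i + 1 < n → closure (Ws i) ⊆ Ws (i + 1)) {i j : ℕ}
    (hij : i ≤ j) (hj : j < n) : Ws i ⊆ Ws j := by
  obtain ⟨k, rfl⟩ := Nat.exists_eq_add_of_le hij
  exact hull_le' hc i k hj

lemma hull_closure_le {n : ℕ} {Ws : ℕ → Set X}
    (hc : ∀ i, i + 1 < n → closure (Ws i) ⊆ Ws (i + 1)) {i : ℕ} (hi : i < n) :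
    closure (Ws i) ⊆ closure (Ws (n - 1)) := by
  have h1 : i ≤ n - 1 := by omega
  rcases eq_or_lt_of_le h1 with h | h
  · rw [h]
  · exact (hc i (by omega)).trans ((hull_le hc (by omega) (by omega)).trans subset_closure)

/-- One-point extension of `X`: neighborhoods of the extra point `none` are the sets whose
trace on `X` misses fewer than `#F` points of `F`. -/
def extTop (F : Set X) (hF : ℵ₀ ≤ #(↥F)) : TopologicalSpace (Option X) where
  IsOpen S := IsOpen (Option.some ⁻¹' S) ∧ (none ∈ S → #(↥(F \ Option.some ⁻¹' S)) < #(↥F))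
  isOpen_univ := ⟨isOpen_univ, fun _ => by
    simp only [Set.preimage_univ, Set.diff_univ, Cardinal.mk_eq_zero]
    exact lt_of_lt_of_le aleph0_pos hF⟩
  isOpen_inter := fun S T hS hT => by
    refine ⟨hS.1.inter hT.1, fun hmem => ?_⟩
    have hsub : F \ Option.some ⁻¹' (S ∩ T) ⊆
        (F \ Option.some ⁻¹' S) ∪ (F \ Option.some ⁻¹' T) := by
      intro x hx
      by_cases hxS : x ∈ Option.some ⁻¹' S
      · exact Or.inr ⟨hx.1, fun hc => hx.2 ⟨hxS, hc⟩⟩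
      · exact Or.inl ⟨hx.1, hxS⟩
    calc #(↥(F \ Option.some ⁻¹' (S ∩ T))) ≤ _ := Cardinal.mk_le_mk_of_subset hsub
      _ ≤ #(↥(F \ Option.some ⁻¹' S)) + #(↥(F \ Option.some ⁻¹' T)) := Cardinal.mk_union_le _ _
      _ < #(↥F) := Cardinal.add_lt_of_lt hF (hS.2 hmem.1) (hT.2 hmem.2)
  isOpen_sUnion := fun C hC => by
    constructor
    · have hpre : Option.some ⁻¹' ⋃₀ C = ⋃ S ∈ C, Option.some ⁻¹' S := by
        ext x; simp [Set.mem_sUnion]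
      rw [hpre]; exact isOpen_biUnion fun S hS => (hC S hS).1
    · intro hmem
      obtain ⟨S, hSC, hnS⟩ := hmem
      refine lt_of_le_of_lt (Cardinal.mk_le_mk_of_subset ?_) ((hC S hSC).2 hnS)
      exact fun x hx => ⟨hx.1, fun hc => hx.2 (Set.mem_preimage.2 ⟨S, hSC, hc⟩)⟩

variable {F : Set X} (hF : ℵ₀ ≤ #(↥F))

lemma extTop_isOpen_iff {S : Set (Option X)} :
    IsOpen[extTop F hF] S ↔
      IsOpen (Option.some ⁻¹' S) ∧ (none ∈ S → #(↥(F \ Option.some ⁻¹' S)) < #(↥F)) :=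
  Iff.rfl

lemma extTop_isOpen_image {U : Set X} (hU : IsOpen U) :
    IsOpen[extTop F hF] (Option.some '' U) := by
  refine (extTop_isOpen_iff hF).2 ⟨?_, fun hmem => ?_⟩
  · rw [Set.preimage_image_eq U (Option.some_injective X)]; exact hU
  · simp at hmem

lemma preimage_some_insert_none (A : Set X) :
    (Option.some ⁻¹' (insert none (Option.some '' A)) : Set X) = A := by
  ext x; simp

lemma extTop_isOpen_insert {V : Set X} (hV : IsOpen V)
    (hsmall : #(↥(F \ V)) < #(↥F)) :
    IsOpen[extTop F hF] (insert none (Option.some '' V)) := by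
  refine (extTop_isOpen_iff hF).2 ⟨?_, fun _ => ?_⟩
  · rw [preimage_some_insert_none]; exact hV
  · rw [preimage_some_insert_none]; exact hsmall

lemma extTop_closure_image_subset (A : Set X) :
    @closure _ (extTop F hF) (Option.some '' A) ⊆ insert none (Option.some '' closure A) := by
  letI := extTop F hF
  intro z hz
  match z with
  | none => exact Set.mem_insert _ _
  | some x =>
    refine Set.mem_insert_of_mem _ ⟨x, ?_, rfl⟩
    rw [mem_closure_iff]
    intro o ho hxo
    obtain ⟨w, hw1, hw2⟩ := (mem_closure_iff.1 hz) (Option.some '' o)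
      (extTop_isOpen_image hF ho) ⟨x, hxo, rfl⟩
    obtain ⟨a, ha, rfl⟩ := hw1
    obtain ⟨b, hb, hba⟩ := hw2
    exact ⟨a, ha, (Option.some_injective X hba) ▸ hb⟩

lemma extTop_none_not_mem_closure {A V : Set X}
    (hV : IsOpen V) (hVA : A ∩ V = ∅) (hsmall : #(↥(F \ V)) < #(↥F)) :
    none ∉ @closure _ (extTop F hF) (Option.some '' A) := by
  letI := extTop F hF
  intro hz
  obtain ⟨w, hw1, hw2⟩ := (mem_closure_iff.1 hz) (insert none (Option.some '' V))
    (extTop_isOpen_insert hF hV hsmall) (Set.mem_insert _ _)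
  obtain ⟨a, ha, rfl⟩ := hw2
  rcases Set.mem_insert_iff.1 hw1 with h | ⟨b, hb, hba⟩
  · simp at h
  · exact Set.eq_empty_iff_forall_notMem.1 hVA a ⟨ha, (Option.some_injective X hba) ▸ hb⟩

lemma extTop_closure_image_subset' {A V : Set X}
    (hV : IsOpen V) (hVA : A ∩ V = ∅) (hsmall : #(↥(F \ V)) < #(↥F)) :
    @closure _ (extTop F hF) (Option.some '' A) ⊆ Option.some '' closure A := by
  intro z hz
  rcases Set.mem_insert_iff.1 (extTop_closure_image_subset hF A hz) with rfl | hmem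
  · exact absurd hz (extTop_none_not_mem_closure hF hV hVA hsmall)
  · exact hmem

lemma extTop_isClosed_none :
    IsClosed[extTop F hF] ({none} : Set (Option X)) := by
  letI := extTop F hF
  rw [← isOpen_compl_iff]
  refine (extTop_isOpen_iff hF).2 ⟨?_, fun hmem => (hmem rfl).elim⟩
  have hpre : Option.some ⁻¹' (({none} : Set (Option X))ᶜ) = Set.univ := by ext x; simp
  rw [hpre]; exact isOpen_univ

lemma extTop_embedding :
    @Topology.IsEmbedding X (Option X) _ (extTop F hF) Option.some := by
  letI := extTop F hF
  refine ⟨⟨?_⟩, Option.some_injective X⟩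
  refine TopologicalSpace.ext_iff.2 fun U => ?_
  rw [isOpen_induced_iff]
  constructor
  · intro hU
    exact ⟨Option.some '' U, extTop_isOpen_image hF hU,
      Set.preimage_image_eq U (Option.some_injective X)⟩
  · rintro ⟨S, hS, rfl⟩
    exact ((extTop_isOpen_iff hF).1 hS).1

lemma extTop_range_not_closed :
    ¬ IsClosed[extTop F hF] (Set.range (Option.some : X → Option X)) := by
  letI := extTop F hF
  intro hcl
  obtain ⟨-, h2⟩ := (extTop_isOpen_iff hF).1 hcl.isOpen_compl
  have hmem : (none : Option X) ∈ (Set.range (Option.some : X → Option X))ᶜ := by simp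
  have hlt := h2 hmem
  have heq : Option.some ⁻¹' (Set.range (Option.some : X → Option X))ᶜ = (∅ : Set X) := by
    ext x; simp
  rw [heq, Set.diff_empty] at hlt
  exact absurd hlt (lt_irrefl _)

end AuxP3

/-- P3: For `n ≥ 1`, every `S(n)`-closed `S(n)`-space is weakly
`S(n)`-closed. -/
theorem snClosed_weaklySnClosed (n : ℕ) (hn : 1 ≤ n)
    (X : Type u) [TopologicalSpace X] (hS : IsSnSpace n X)
    (h : IsSnClosedSpace n X) : WeaklySnClosed n X := by
  obtain ⟨m, rfl⟩ : ∃ m, n = m + 1 := ⟨n - 1, by omega⟩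
  intro F hFinf _hreg
  by_contra hno
  push_neg at hno
  have hF : ℵ₀ ≤ #(↥F) := by
    haveI := hFinf.to_subtype; exact Cardinal.aleph0_le_mk ↥F
  -- every point has an `n`-hull all of whose levels capture few points of `F`
  have hsmall : ∀ x : X, ∃ Ws : ℕ → Set X,
      (∀ i < m + 1, IsOpen (Ws i) ∧ x ∈ Ws i) ∧
      (∀ i, i + 1 < m + 1 → closure (Ws i) ⊆ Ws (i + 1)) ∧
      ∀ i < m + 1, #(↥(F ∩ closure (Ws i))) < #(↥F) := by
    intro x
    have hx := hno x
    unfold IsThetaCompleteAccPt at hx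
    push_neg at hx
    obtain ⟨U, ⟨Us, hU1, hU2, hU3⟩, hUne⟩ := hx
    subst hU3
    refine ⟨Us, hU1, hU2, fun i hi => ?_⟩
    have htop : #(↥(F ∩ closure (Us (m + 1 - 1)))) < #(↥F) :=
      lt_of_le_of_ne (Cardinal.mk_le_mk_of_subset Set.inter_subset_left) hUne
    exact lt_of_le_of_lt (Cardinal.mk_le_mk_of_subset
      (Set.inter_subset_inter_right _ (hull_closure_le hU2 hi))) htop
  choose Ws hWs1 hWs2 hWs3 using hsmall
  letI tZ : TopologicalSpace (Option X) := extTop F hF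
  have himg : ∀ As : ℕ → Set X,
      (∀ i, i + 1 < m + 1 → closure (As i) ⊆ As (i + 1)) →
      #(↥(F ∩ closure (As m))) < #(↥F) →
      ∀ i ≤ m, closure (Option.some '' As i) ⊆ Option.some '' closure (As i) := by
    intro As hchain hsm i hi
    refine extTop_closure_image_subset' hF (V := (closure (As m))ᶜ)
      isClosed_closure.isOpen_compl ?_ ?_
    · exact Set.eq_empty_iff_forall_notMem.2 fun a ha =>
        ha.2 (subset_closure (hull_le hchain hi (Nat.lt_succ_self m) ha.1))
    · rw [Set.diff_compl]; exact hsm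
  have hZ : IsSnSpace (m + 1) (Option X) := by
    rintro (_ | x) (_ | y) hxy
    · exact absurd rfl hxy
    · -- separate `none` from `some y`
      intro hmem
      simp only [thetaCl, Set.mem_setOf_eq] at hmem
      have hhull : IsNHull (m + 1) (none : Option X)
          (insert none (Option.some '' (closure (Ws y (m - m)))ᶜ)) := by
        refine ⟨fun i => insert none (Option.some '' (closure (Ws y (m - i)))ᶜ),
          fun i hi => ⟨?_, Set.mem_insert _ _⟩, fun i hi => ?_, rfl⟩
        · exact extTop_isOpen_insert hF isClosed_closure.isOpen_compl
            (by rw [Set.diff_compl]; exact hWs3 y (m - i) (by omega))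
        · obtain ⟨j, hj⟩ : ∃ j, m - i = j + 1 := ⟨m - i - 1, by omega⟩
          have hj2 : m - (i + 1) = j := by omega
          show closure (insert none (Option.some '' (closure (Ws y (m - i)))ᶜ)) ⊆
            insert none (Option.some '' (closure (Ws y (m - (i + 1))))ᶜ)
          rw [hj, hj2]
          intro z hz
          rw [Set.insert_eq, closure_union] at hz
          rcases hz with hz | hz
          · rw [(extTop_isClosed_none hF).closure_eq, Set.mem_singleton_iff] at hz
            rw [hz]; exact Set.mem_insert _ _
          · rcases Set.mem_insert_iff.1 (extTop_closure_image_subset hF _ hz)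
              with rfl | ⟨a, ha, rfl⟩
            · exact Set.mem_insert _ _
            · refine Set.mem_insert_of_mem _ ⟨a, ?_, rfl⟩
              intro hacl
              have haW : a ∈ Ws y (j + 1) := hWs2 y j (by omega) hacl
              obtain ⟨b, hb1, hb2⟩ := mem_closure_iff.1 ha (Ws y (j + 1))
                (hWs1 y (j + 1) (by omega)).1 haW
              exact hb2 (subset_closure hb1)
      obtain ⟨w, hw1, hw2⟩ := hmem _ hhull
      rw [Set.mem_singleton_iff] at hw2
      subst hw2
      rw [Set.insert_eq, closure_union] at hw1
      rcases hw1 with hw1 | hw1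
      · rw [(extTop_isClosed_none hF).closure_eq, Set.mem_singleton_iff] at hw1
        exact Option.some_ne_none y hw1
      · rcases Set.mem_insert_iff.1 (extTop_closure_image_subset hF _ hw1)
          with hc | ⟨a, ha, haa⟩
        · exact Option.some_ne_none y hc
        · have ha' : y ∈ closure ((closure (Ws y (m - m)))ᶜ) :=
            (Option.some_injective X haa) ▸ ha
          obtain ⟨b, hb1, hb2⟩ := mem_closure_iff.1 ha' (Ws y (m - m))
            (hWs1 y (m - m) (by omega)).1 (hWs1 y (m - m) (by omega)).2
          exact hb2 (subset_closure hb1)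
    · -- separate `some x` from `none`
      intro hmem
      simp only [thetaCl, Set.mem_setOf_eq] at hmem
      have hsmtop : #(↥(F ∩ closure (Ws x m))) < #(↥F) := hWs3 x m (Nat.lt_succ_self m)
      have hhull : IsNHull (m + 1) (Option.some x) (Option.some '' Ws x m) := by
        refine ⟨fun i => Option.some '' Ws x i, fun i hi =>
          ⟨extTop_isOpen_image hF (hWs1 x i hi).1, ⟨x, (hWs1 x i hi).2, rfl⟩⟩,
          fun i hi => ?_, rfl⟩
        exact (himg (Ws x) (hWs2 x) hsmtop i (by omega)).trans
          (Set.image_mono (hWs2 x i hi))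
      obtain ⟨w, hw1, hw2⟩ := hmem _ hhull
      rw [Set.mem_singleton_iff] at hw2
      subst hw2
      obtain ⟨a, -, haa⟩ := himg (Ws x) (hWs2 x) hsmtop m le_rfl hw1
      exact Option.some_ne_none a haa
    · -- separate `some x` from `some y`
      intro hmem
      simp only [thetaCl, Set.mem_setOf_eq] at hmem
      have hxy' : x ≠ y := fun e => hxy (by rw [e])
      have hsep := hS x y hxy'
      simp only [thetaCl, Set.mem_setOf_eq] at hsep
      push_neg at hsep
      obtain ⟨U, ⟨Vs, hV1, hV2, hV3⟩, hUy⟩ := hsep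
      subst hV3
      have hy : y ∉ closure (Vs (m + 1 - 1)) := fun hy =>
        Set.eq_empty_iff_forall_notMem.1 hUy y ⟨hy, rfl⟩
      have hchain : ∀ i, i + 1 < m + 1 →
          closure (Vs i ∩ Ws x i) ⊆ Vs (i + 1) ∩ Ws x (i + 1) := fun i hi =>
        Set.subset_inter ((closure_mono Set.inter_subset_left).trans (hV2 i hi))
          ((closure_mono Set.inter_subset_right).trans (hWs2 x i hi))
      have hsm : #(↥(F ∩ closure (Vs m ∩ Ws x m))) < #(↥F) :=
        lt_of_le_of_lt (Cardinal.mk_le_mk_of_subset (Set.inter_subset_inter_right _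
          (closure_mono Set.inter_subset_right))) (hWs3 x m (Nat.lt_succ_self m))
      have hhull : IsNHull (m + 1) (Option.some x)
          (Option.some '' (Vs m ∩ Ws x m)) := by
        refine ⟨fun i => Option.some '' (Vs i ∩ Ws x i), fun i hi =>
          ⟨extTop_isOpen_image hF ((hV1 i hi).1.inter (hWs1 x i hi).1),
            ⟨x, ⟨(hV1 i hi).2, (hWs1 x i hi).2⟩, rfl⟩⟩, fun i hi => ?_, rfl⟩
        exact (himg (fun i => Vs i ∩ Ws x i) hchain hsm i (by omega)).trans
          (Set.image_mono (hchain i hi))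
      obtain ⟨w, hw1, hw2⟩ := hmem _ hhull
      rw [Set.mem_singleton_iff] at hw2
      subst hw2
      obtain ⟨a, ha, haa⟩ := himg (fun i => Vs i ∩ Ws x i) hchain hsm m le_rfl hw1
      have ha' : y ∈ closure (Vs m ∩ Ws x m) := (Option.some_injective X haa) ▸ ha
      exact hy (closure_mono Set.inter_subset_left ha')
  have hclosed := h (Option X) hZ Option.some (extTop_embedding hF)
  exact extTop_range_not_closed hF hclosed
end

section
/- (Dikranjan–Giuli characterization) Let n ≥ 1 and let X be an S(n)-space. The following are equivalent: (1) ad_{θ^{n−1}}(F) ≠ ∅ for every closed filter F on X; (2) ad(G) ≠ ∅ for every closed S(n−1)-filter G on X; (3) every S(n−1)-cover of X has a finite subcover; (4) X is S(n)-θ-closed. -/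
open Set Topology Filter Cardinal

universe u

variable {X : Type u}

section Helpers

variable {Y : Type u} [TopologicalSpace Y]

lemma isNHull_one_iff {x : Y} {U : Set Y} : IsNHull 1 x U ↔ IsOpen U ∧ x ∈ U := by
  constructor
  · rintro ⟨Us, h1, _, h3⟩
    have h0 := h1 0 (by norm_num)
    rw [show (1:ℕ) - 1 = 0 from rfl] at h3
    exact h3 ▸ h0
  · rintro ⟨hU, hx⟩
    exact ⟨fun _ => U, fun i _ => ⟨hU, hx⟩, fun i hi => absurd hi (by omega), rfl⟩

lemma chain_monotone {A : ℕ → Set Y} {m : ℕ} (h : ∀ i, i < m → closure (A i) ⊆ A (i + 1)) :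
    ∀ j, j ≤ m → ∀ i, i ≤ j → A i ⊆ A j := by
  intro j
  induction j with
  | zero =>
    intro _ i hi
    have h0 : i = 0 := Nat.le_zero.mp hi
    subst h0; exact subset_rfl
  | succ k ih =>
    intro hk i hi
    rcases Nat.eq_or_lt_of_le hi with rfl | hlt
    · exact subset_rfl
    · exact (ih (by omega) i (by omega)).trans (subset_closure.trans (h k (by omega)))

lemma closure_subset_thetaCl (m : ℕ) (M : Set Y) : closure M ⊆ thetaCl m M := by
  cases m with
  | zero => exact subset_rfl
  | succ k =>
    intro x hx U hU
    obtain ⟨Us, h1, _, h3⟩ := hU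
    have hk := h1 (k + 1 - 1) (by omega)
    rw [h3] at hk
    exact ((mem_closure_iff.mp hx) U hk.1 hk.2).mono (inter_subset_inter_left M subset_closure)

lemma subset_thetaCl (m : ℕ) (M : Set Y) : M ⊆ thetaCl m M :=
  subset_closure.trans (closure_subset_thetaCl m M)

lemma thetaCl_mono (m : ℕ) {M N : Set Y} (h : M ⊆ N) : thetaCl m M ⊆ thetaCl m N := by
  cases m with
  | zero => exact closure_mono h
  | succ k =>
    intro x hx U hU
    exact (hx U hU).mono (inter_subset_inter_right _ h)

/-- hull-style non-membership, general level, plain disjointness at top. -/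
lemma not_thetaCl_of_chain {m : ℕ} {x : Y} {M : Set Y} (A : ℕ → Set Y)
    (hopen : ∀ i, IsOpen (A i)) (hmem : ∀ i, x ∈ A i)
    (hchain : ∀ i, i < m → closure (A i) ⊆ A (i + 1))
    (hdisj : A m ∩ M = ∅) : x ∉ thetaCl m M := by
  cases m with
  | zero =>
    intro hx
    obtain ⟨y, hy1, hy2⟩ := mem_closure_iff.mp hx (A 0) (hopen 0) (hmem 0)
    exact absurd hdisj (Set.nonempty_iff_ne_empty.mp ⟨y, hy1, hy2⟩)
  | succ k =>
    intro hx
    obtain ⟨y, hy1, hy2⟩ := hx (A k)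
      ⟨A, fun i _ => ⟨hopen i, hmem i⟩, fun i hi => hchain i (by omega), by simp⟩
    have : y ∈ A (k + 1) := hchain k (by omega) hy1
    exact absurd hdisj (Set.nonempty_iff_ne_empty.mp ⟨y, this, hy2⟩)

/-- succ-level version with closure-disjointness at top. -/
lemma not_thetaCl_succ_of_chain {k : ℕ} {x : Y} {M : Set Y} (A : ℕ → Set Y)
    (hopen : ∀ i, i < k + 1 → IsOpen (A i) ∧ x ∈ A i)
    (hchain : ∀ i, i + 1 < k + 1 → closure (A i) ⊆ A (i + 1))
    (htop : closure (A k) ∩ M = ∅) : x ∉ thetaCl (k + 1) M := by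
  intro hx
  have := hx (A k) ⟨A, hopen, hchain, by simp⟩
  rw [htop] at this
  exact Set.not_nonempty_empty this

lemma chain_of_not_thetaCl {m : ℕ} {x : Y} {M : Set Y} (hM : IsClosed M)
    (h : x ∉ thetaCl m M) :
    ∃ A : ℕ → Set Y, (∀ i, IsOpen (A i)) ∧ (∀ i, x ∈ A i) ∧
      (∀ i, i < m → closure (A i) ⊆ A (i + 1)) ∧ A m = Mᶜ := by
  cases m with
  | zero =>
    have hx : x ∉ M := fun hxM => h (subset_thetaCl 0 M hxM)
    exact ⟨fun _ => Mᶜ, fun _ => hM.isOpen_compl, fun _ => hx, fun i hi => absurd hi (by omega),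
      rfl⟩
  | succ k =>
    simp only [thetaCl, mem_setOf_eq, not_forall] at h
    obtain ⟨U, hU, hUM⟩ := h
    rw [Set.not_nonempty_iff_eq_empty] at hUM
    obtain ⟨Us, h1, h2, h3⟩ := hU
    rw [show k + 1 - 1 = k from rfl] at h3
    have hclU : closure (Us k) ⊆ Mᶜ := by
      rw [h3]; intro y hy hyM; exact absurd hUM (Set.nonempty_iff_ne_empty.mp ⟨y, hy, hyM⟩)
    have hxM : x ∈ Mᶜ := hclU (subset_closure ((h1 k (by omega)).2))
    refine ⟨fun i => if i < k + 1 then Us i else Mᶜ, ?_, ?_, ?_, ?_⟩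
    · intro i
      dsimp only
      by_cases hi : i < k + 1
      · rw [if_pos hi]; exact (h1 i hi).1
      · rw [if_neg hi]; exact hM.isOpen_compl
    · intro i
      dsimp only
      by_cases hi : i < k + 1
      · rw [if_pos hi]; exact (h1 i hi).2
      · rw [if_neg hi]; exact hxM
    · intro i hik
      dsimp only
      by_cases hi : i + 1 < k + 1
      · rw [if_pos hi, if_pos (by omega : i < k + 1)]
        exact h2 i hi
      · rw [if_pos (by omega : i < k + 1), if_neg hi]
        have hik2 : i = k := by omega
        rw [hik2]
        exact hclU
    · dsimp only
      rw [if_neg (by omega : ¬ (k + 1 < k + 1))]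

lemma chain_of_not_thetaCl_succ {k : ℕ} {x : Y} {M : Set Y}
    (h : x ∉ thetaCl (k + 1) M) :
    ∃ A : ℕ → Set Y, (∀ i, IsOpen (A i)) ∧ (∀ i, x ∈ A i) ∧
      (∀ i, i < k → closure (A i) ⊆ A (i + 1)) ∧ closure (A k) ∩ M = ∅ := by
  simp only [thetaCl, mem_setOf_eq, not_forall] at h
  obtain ⟨U, hU, hUM⟩ := h
  rw [Set.not_nonempty_iff_eq_empty] at hUM
  obtain ⟨Us, h1, h2, h3⟩ := hU
  rw [show k + 1 - 1 = k from rfl] at h3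
  refine ⟨fun i => Us (min i k), ?_, ?_, ?_, ?_⟩
  · intro i; exact (h1 (min i k) (by omega)).1
  · intro i; exact (h1 (min i k) (by omega)).2
  · intro i hik
    dsimp only
    rw [min_eq_left (by omega : i ≤ k), min_eq_left (by omega : i + 1 ≤ k)]
    exact h2 i (by omega)
  · dsimp only
    rw [min_self, h3]
    exact hUM

lemma closure_compl_closure_subset {V : Set Y} (hV : IsOpen V) :
    closure ((closure V)ᶜ) ⊆ Vᶜ := by
  intro y hy hyV
  have h2 := hV.inter_closure ⟨hyV, hy⟩
  have he : V ∩ (closure V)ᶜ = ∅ := by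
    rw [eq_empty_iff_forall_notMem]
    rintro w ⟨hw1, hw2⟩
    exact hw2 (subset_closure hw1)
  rw [he, closure_empty] at h2
  exact h2

end Helpers

section Impl
variable [TopologicalSpace X]

lemma mem_adTheta_iff {k : ℕ} {F : Filter X} {x : X} :
    x ∈ adTheta k F ↔ ∀ s ∈ F, x ∈ thetaCl k s := by
  simp [adTheta]

lemma impl12 (m : ℕ)
    (h1 : ∀ F : Filter X, IsClosedFilter F → (adTheta m F).Nonempty) :
    ∀ G : Filter X, IsClosedFilter G → IsSnFilter m G → (adTheta 0 G).Nonempty := by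
  intro G hG hSn
  obtain ⟨x, hx⟩ := h1 G hG
  refine ⟨x, ?_⟩
  by_contra hx0
  obtain ⟨s, hs, hxs⟩ := hSn x hx0
  exact hxs (mem_adTheta_iff.mp hx s hs)

lemma impl23 (m : ℕ)
    (h2 : ∀ G : Filter X, IsClosedFilter G → IsSnFilter m G → (adTheta 0 G).Nonempty) :
    ∀ C : Set (Set X), IsSnCover m C →
      ∃ t : Finset (Set X), ↑t ⊆ C ∧ ⋃₀ (↑t : Set (Set X)) = Set.univ := by
  intro C hC
  by_contra hnof
  classical
  push_neg at hnof
  -- the filter of complements of finite unions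
  let G : Filter X :=
    { sets := {s | ∃ t : Finset (Set X), ↑t ⊆ C ∧ (⋃₀ (↑t : Set (Set X)))ᶜ ⊆ s}
      univ_sets := ⟨∅, by simp⟩
      sets_of_superset := by
        rintro s s' ⟨t, ht, hts⟩ hss'
        exact ⟨t, ht, hts.trans hss'⟩
      inter_sets := by
        rintro s s' ⟨t, ht, hts⟩ ⟨t', ht', hts'⟩
        refine ⟨t ∪ t', by simp [ht, ht', union_subset], ?_⟩
        rw [Finset.coe_union, sUnion_union, compl_union]
        exact subset_inter ((inter_subset_left).trans hts) ((inter_subset_right).trans hts') }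
  have hGmem : ∀ s, s ∈ G ↔ ∃ t : Finset (Set X), ↑t ⊆ C ∧ (⋃₀ (↑t : Set (Set X)))ᶜ ⊆ s :=
    fun s => Iff.rfl
  have hne : G.NeBot := by
    refine ⟨fun hbot => ?_⟩
    have : ∅ ∈ G := hbot ▸ Filter.mem_bot
    obtain ⟨t, ht, hts⟩ := (hGmem ∅).mp this
    have : ⋃₀ (↑t : Set (Set X)) = Set.univ := by
      rw [← compl_empty_iff]
      exact eq_empty_iff_forall_notMem.mpr fun x hx => hts hx
    exact hnof t ht this
  have hclosed : IsClosedFilter G := by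
    refine ⟨hne, ?_⟩
    rintro s ⟨t, ht, hts⟩
    refine ⟨(⋃₀ (↑t : Set (Set X)))ᶜ, ⟨t, ht, subset_rfl⟩, ?_, hts⟩
    exact (isOpen_sUnion fun U hU => hC.1 U (ht hU)).isClosed_compl
  have hSn : IsSnFilter m G := by
    intro x _
    obtain ⟨U, hUC, hxU⟩ := hC.2.2 x
    refine ⟨Uᶜ, ⟨{U}, by simpa using hUC, by simp⟩, ?_⟩
    rw [thetaInt] at hxU
    exact hxU
  obtain ⟨x, hx⟩ := h2 G hclosed hSn
  obtain ⟨U, hUC, hxU⟩ := hC.2.2 x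
  have hUm : Uᶜ ∈ G := ⟨{U}, by simpa using hUC, by simp⟩
  have : x ∈ thetaCl 0 Uᶜ := mem_adTheta_iff.mp hx Uᶜ hUm
  have : x ∈ thetaCl m Uᶜ := closure_subset_thetaCl m Uᶜ this
  rw [thetaInt] at hxU
  exact hxU this

lemma impl31 (m : ℕ)
    (h3 : ∀ C : Set (Set X), IsSnCover m C →
      ∃ t : Finset (Set X), ↑t ⊆ C ∧ ⋃₀ (↑t : Set (Set X)) = Set.univ) :
    ∀ F : Filter X, IsClosedFilter F → (adTheta m F).Nonempty := by
  intro F hF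
  by_contra hne
  rw [Set.not_nonempty_iff_eq_empty] at hne
  have hx : ∀ x : X, ∃ C : Set X, C ∈ F ∧ IsClosed C ∧ x ∉ thetaCl m C := by
    intro x
    have : x ∉ adTheta m F := by rw [hne]; exact notMem_empty x
    rw [mem_adTheta_iff] at this
    push_neg at this
    obtain ⟨s, hs, hxs⟩ := this
    obtain ⟨c, hcF, hccl, hcs⟩ := hF.2 s hs
    exact ⟨c, hcF, hccl, fun h => hxs (thetaCl_mono m hcs h)⟩
  choose Cx hCF hCcl hCth using hx
  have hcov : IsSnCover m (Set.range fun x => (Cx x)ᶜ) := by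
    refine ⟨?_, ?_, ?_⟩
    · rintro U ⟨x, rfl⟩; exact (hCcl x).isOpen_compl
    · rw [eq_univ_iff_forall]
      intro x
      refine ⟨(Cx x)ᶜ, ⟨x, rfl⟩, fun h => (hCth x) (subset_thetaCl m _ h)⟩
    · intro x
      refine ⟨(Cx x)ᶜ, ⟨x, rfl⟩, ?_⟩
      rw [thetaInt, compl_compl]
      exact hCth x
  obtain ⟨t, htsub, htun⟩ := h3 _ hcov
  have hmem : ∀ U ∈ t, Uᶜ ∈ F := by
    intro U hU
    obtain ⟨x, hx⟩ := htsub hU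
    rw [← hx, compl_compl]
    exact hCF x
  have hbi : (⋂ U ∈ t, Uᶜ) ∈ F := (Filter.biInter_mem t.finite_toSet).mpr hmem
  have : (⋂ U ∈ t, Uᶜ) = ∅ := by
    rw [eq_empty_iff_forall_notMem]
    intro x hx
    have : x ∈ ⋃₀ (↑t : Set (Set X)) := htun ▸ mem_univ x
    obtain ⟨U, hU, hxU⟩ := this
    exact (mem_iInter₂.mp hx U hU) hxU
  rw [this] at hbi
  exact hF.1.ne (Filter.empty_mem_iff_bot.mp hbi)

lemma impl34 (m : ℕ) (_hX : IsSnSpace (m + 1) X)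
    (h3 : ∀ C : Set (Set X), IsSnCover m C →
      ∃ t : Finset (Set X), ↑t ⊆ C ∧ ⋃₀ (↑t : Set (Set X)) = Set.univ) :
    IsSnThetaClosedSpace (m + 1) X := by
  intro Z _ hZ e he
  rw [IsThetaClosed]
  apply subset_antisymm
  swap
  · intro z hz U hU
    rw [isNHull_one_iff] at hU
    exact ⟨z, subset_closure hU.2, hz⟩
  intro z hz
  by_contra hzr
  -- for each x, a hull at e x avoiding z
  have hsep : ∀ x : X, ∃ A : ℕ → Set Z, (∀ i, IsOpen (A i)) ∧ (∀ i, e x ∈ A i) ∧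
      (∀ i, i < m → closure (A i) ⊆ A (i + 1)) ∧ closure (A m) ∩ ({z} : Set Z) = ∅ := by
    intro x
    have hne : e x ≠ z := fun h => hzr (h ▸ mem_range_self x)
    exact chain_of_not_thetaCl_succ (hZ (e x) z hne)
  choose A hAo hAm hAc hAtop using hsep
  -- the S(m)-cover
  have hcov : IsSnCover m (Set.range fun x => e ⁻¹' (A x m)) := by
    refine ⟨?_, ?_, ?_⟩
    · rintro U ⟨x, rfl⟩; exact (hAo x m).preimage he.continuous
    · rw [eq_univ_iff_forall]
      intro x
      exact ⟨e ⁻¹' (A x m), ⟨x, rfl⟩, hAm x m⟩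
    · intro x
      refine ⟨e ⁻¹' (A x m), ⟨x, rfl⟩, ?_⟩
      rw [thetaInt]
      refine not_thetaCl_of_chain (fun i => e ⁻¹' (A x i))
        (fun i => (hAo x i).preimage he.continuous) (fun i => hAm x i) ?_ (by simp)
      intro i him
      exact (he.continuous.closure_preimage_subset (A x i)).trans
        (preimage_mono (hAc x i him))
  obtain ⟨t, htsub, htun⟩ := h3 _ hcov
  -- big open set covering range e, z not in its closure
  have hch : ∀ U ∈ t, ∃ x : X, e ⁻¹' (A x m) = U := fun U hU => htsub hU
  choose xf hxf using hch
  classical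
  let big : Set Z := ⋃ U ∈ t.attach, A (xf U.1 U.2) m
  have hbigopen : IsOpen big := isOpen_biUnion fun U _ => hAo _ m
  have hrange : range e ⊆ big := by
    rintro - ⟨y, rfl⟩
    have : y ∈ ⋃₀ (↑t : Set (Set X)) := htun ▸ mem_univ y
    obtain ⟨U, hU, hyU⟩ := this
    rw [← hxf U hU] at hyU
    exact mem_biUnion (Finset.mem_attach t ⟨U, hU⟩) hyU
  have hzcl : z ∉ closure big := by
    rw [Finset.closure_biUnion]
    simp only [mem_iUnion]
    rintro ⟨U, -, hz2⟩
    have h5 := hAtop (xf U.1 U.2)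
    rw [eq_empty_iff_forall_notMem] at h5
    exact h5 z ⟨hz2, rfl⟩
  -- contradiction with z ∈ thetaCl 1 (range e)
  have := hz (closure big)ᶜ (isNHull_one_iff.mpr ⟨isClosed_closure.isOpen_compl, hzcl⟩)
  obtain ⟨w, hw1, hw2⟩ := this
  have hwb : w ∈ big := hrange hw2
  have : w ∈ closure ((closure big)ᶜ) := hw1
  have h6 : big ∩ closure ((closure big)ᶜ) ⊆ closure (big ∩ (closure big)ᶜ) :=
    hbigopen.inter_closure
  have h7 : big ∩ (closure big)ᶜ = ∅ := by
    rw [eq_empty_iff_forall_notMem]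
    rintro y ⟨hy1, hy2⟩
    exact hy2 (subset_closure hy1)
  have := h6 ⟨hwb, hw1⟩
  rw [h7, closure_empty] at this
  exact this

end Impl

section Extension

variable (X : Type u) [TopologicalSpace X] (F : Filter X)

/-- Index type for the auxiliary fan: pairs `(C, W)` with `C ∈ F` closed, `W` open
meeting `C`. -/
def DGIdx : Type u :=
  {q : Set X × Set X // q.1 ∈ F ∧ IsClosed q.1 ∧ IsOpen q.2 ∧ (q.1 ∩ q.2).Nonempty}

/-- The extension space: `X` plus an auxiliary fan plus one extra point. -/
def DGZ : Type u := Option (X ⊕ (DGIdx X F × ℕ))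

variable {X F}

namespace DGZ

def ofX (x : X) : DGZ X F := some (Sum.inl x)
def ofA (a : DGIdx X F × ℕ) : DGZ X F := some (Sum.inr a)
def pt : DGZ X F := none

/-- basic open set attached to an open `W ⊆ X`. -/
def bz (W : Set X) (f : DGIdx X F → ℕ) : Set (DGZ X F) :=
  fun z => Option.elim z False (Sum.elim (fun x => x ∈ W)
    (fun a => a.1.val.2 ⊆ W ∧ f a.1 ≤ a.2))

/-- basic open neighbourhood of the extra point, attached to `Cs ∈ F` closed. -/
def bp (Cs : Set X) (g : DGIdx X F → ℕ) : Set (DGZ X F) :=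
  fun z => Option.elim z True (Sum.elim (fun _ => False)
    (fun a => a.1.val.1 ⊆ Cs ∧ g a.1 ≤ a.2))

lemma ofX_mem_bz {x : X} {W : Set X} {f} : (ofX x : DGZ X F) ∈ bz W f ↔ x ∈ W := Iff.rfl
lemma ofA_mem_bz {a : DGIdx X F × ℕ} {W : Set X} {f} :
    (ofA a : DGZ X F) ∈ bz W f ↔ a.1.val.2 ⊆ W ∧ f a.1 ≤ a.2 := Iff.rfl
lemma pt_mem_bz {W : Set X} {f} : (pt : DGZ X F) ∈ bz W f ↔ False := Iff.rfl
lemma pt_mem_bp {Cs : Set X} {g} : (pt : DGZ X F) ∈ bp Cs g ↔ True := Iff.rfl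
lemma ofX_mem_bp {x : X} {Cs : Set X} {g} : (ofX x : DGZ X F) ∈ bp Cs g ↔ False := Iff.rfl
lemma ofA_mem_bp {a : DGIdx X F × ℕ} {Cs : Set X} {g} :
    (ofA a : DGZ X F) ∈ bp Cs g ↔ a.1.val.1 ⊆ Cs ∧ g a.1 ≤ a.2 := Iff.rfl

def basis (X : Type u) [TopologicalSpace X] (F : Filter X) : Set (Set (DGZ X F)) :=
  {s | (∃ W f, IsOpen W ∧ s = bz W f) ∨ (∃ a, s = {ofA a}) ∨
    (∃ Cs g, Cs ∈ F ∧ IsClosed Cs ∧ s = bp Cs g)}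

instance : TopologicalSpace (DGZ X F) := TopologicalSpace.generateFrom (basis X F)

lemma mem_basis_bz {W : Set X} {f} (hW : IsOpen W) : bz W f ∈ basis X F :=
  Or.inl ⟨W, f, hW, rfl⟩
lemma mem_basis_ba {a : DGIdx X F × ℕ} : {ofA a} ∈ basis X F := Or.inr (Or.inl ⟨a, rfl⟩)
lemma mem_basis_bp {Cs : Set X} {g} (h : Cs ∈ F) (hc : IsClosed Cs) : bp Cs g ∈ basis X F :=
  Or.inr (Or.inr ⟨Cs, g, h, hc, rfl⟩)

lemma isOpen_bz {W : Set X} {f} (hW : IsOpen W) : IsOpen (bz (F := F) W f) :=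
  TopologicalSpace.isOpen_generateFrom_of_mem (mem_basis_bz hW)
lemma isOpen_ba {a : DGIdx X F × ℕ} : IsOpen ({ofA a} : Set (DGZ X F)) :=
  TopologicalSpace.isOpen_generateFrom_of_mem mem_basis_ba
lemma isOpen_bp {Cs : Set X} {g} (h : Cs ∈ F) (hc : IsClosed Cs) :
    IsOpen (bp (F := F) Cs g) :=
  TopologicalSpace.isOpen_generateFrom_of_mem (mem_basis_bp h hc)

lemma ofX_ne_ofA {x : X} {a : DGIdx X F × ℕ} : (ofX x : DGZ X F) ≠ ofA a :=
  fun h => Sum.inl_ne_inr (Option.some_injective (X ⊕ (DGIdx X F × ℕ)) h)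
lemma pt_ne_ofA {a : DGIdx X F × ℕ} : (pt : DGZ X F) ≠ ofA a :=
  fun h => Option.some_ne_none (Sum.inr a : X ⊕ (DGIdx X F × ℕ)) h.symm
lemma ofX_injective : Function.Injective (ofX : X → DGZ X F) :=
  fun _ _ h => Sum.inl_injective (Option.some_injective _ h)

lemma bz_mono {W W' : Set X} {f} (h : W ⊆ W') : bz (F := F) W f ⊆ bz W' f := by
  rintro (_ | x | ⟨i, k⟩) hz
  · exact hz
  · exact h hz
  · exact ⟨hz.1.trans h, hz.2⟩

lemma bp_mono {Cs Cs' : Set X} {g} (h : Cs ⊆ Cs') : bp (F := F) Cs g ⊆ bp Cs' g := by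
  rintro (_ | x | ⟨i, k⟩) hz
  · exact trivial
  · exact hz
  · exact ⟨hz.1.trans h, hz.2⟩

lemma basis_inter {b₁ b₂ : Set (DGZ X F)} (h₁ : b₁ ∈ basis X F) (h₂ : b₂ ∈ basis X F)
    {a : DGZ X F} (ha : a ∈ b₁ ∩ b₂) :
    ∃ b₃ ∈ basis X F, a ∈ b₃ ∧ b₃ ⊆ b₁ ∩ b₂ := by
  obtain ⟨ha₁, ha₂⟩ := ha
  match a with
  | some (Sum.inr aa) =>
      exact ⟨{ofA aa}, mem_basis_ba, rfl, by
        rintro z hz; rw [mem_singleton_iff] at hz; subst hz; exact ⟨ha₁, ha₂⟩⟩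
  | some (Sum.inl x) =>
      rcases h₁ with ⟨W₁, f₁, hW₁, rfl⟩ | ⟨a₁, h⟩ | ⟨C₁, g₁, _, _, rfl⟩
      · rcases h₂ with ⟨W₂, f₂, hW₂, rfl⟩ | ⟨a₂, h⟩ | ⟨C₂, g₂, _, _, rfl⟩
        · refine ⟨bz (W₁ ∩ W₂) (fun i => max (f₁ i) (f₂ i)), mem_basis_bz (hW₁.inter hW₂),
            ⟨ha₁, ha₂⟩, ?_⟩
          rintro (_ | y | ⟨i, k⟩) hz
          · exact hz.elim
          · exact hz
          · exact ⟨⟨hz.1.trans inter_subset_left, (le_max_left _ _).trans hz.2⟩,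
              ⟨hz.1.trans inter_subset_right, (le_max_right _ _).trans hz.2⟩⟩
        · subst h; exact absurd ha₂ ofX_ne_ofA
        · exact ha₂.elim
      · subst h; exact absurd ha₁ ofX_ne_ofA
      · exact ha₁.elim
  | none =>
      rcases h₁ with ⟨W₁, f₁, hW₁, rfl⟩ | ⟨a₁, h⟩ | ⟨C₁, g₁, hC₁, hc₁, rfl⟩
      · exact ha₁.elim
      · subst h; exact absurd ha₁ pt_ne_ofA
      · rcases h₂ with ⟨W₂, f₂, hW₂, rfl⟩ | ⟨a₂, h⟩ | ⟨C₂, g₂, hC₂, hc₂, rfl⟩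
        · exact ha₂.elim
        · subst h; exact absurd ha₂ pt_ne_ofA
        · refine ⟨bp (C₁ ∩ C₂) (fun i => max (g₁ i) (g₂ i)),
            mem_basis_bp (Filter.inter_mem hC₁ hC₂) (hc₁.inter hc₂), trivial, ?_⟩
          rintro (_ | y | ⟨i, k⟩) hz
          · exact ⟨trivial, trivial⟩
          · exact hz.elim
          · exact ⟨⟨hz.1.trans inter_subset_left, (le_max_left _ _).trans hz.2⟩,
              ⟨hz.1.trans inter_subset_right, (le_max_right _ _).trans hz.2⟩⟩

lemma isBasis : TopologicalSpace.IsTopologicalBasis (basis X F) := by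
  apply TopologicalSpace.isTopologicalBasis_of_isOpen_of_nhds
  · intro u hu
    exact TopologicalSpace.isOpen_generateFrom_of_mem hu
  · intro a u hau hu
    have hu' : TopologicalSpace.GenerateOpen (basis X F) u := hu
    clear hu
    induction hu' with
    | basic s hs => exact ⟨s, hs, hau, subset_rfl⟩
    | univ =>
      match a with
      | none =>
        exact ⟨bp Set.univ (fun _ => 0),
          mem_basis_bp Filter.univ_mem isClosed_univ, trivial, subset_univ _⟩
      | some (Sum.inl x) =>
        exact ⟨bz Set.univ (fun _ => 0), mem_basis_bz isOpen_univ, mem_univ x, subset_univ _⟩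
      | some (Sum.inr aa) =>
        exact ⟨{ofA aa}, mem_basis_ba, rfl, subset_univ _⟩
    | inter s t _ _ ihs iht =>
      obtain ⟨bs, hbs, habs, hbss⟩ := ihs hau.1
      obtain ⟨bt, hbt, habt, hbtt⟩ := iht hau.2
      obtain ⟨b₃, hb₃, hab₃, hsub⟩ := basis_inter hbs hbt ⟨habs, habt⟩
      exact ⟨b₃, hb₃, hab₃, hsub.trans (inter_subset_inter hbss hbtt)⟩
    | sUnion S _ ih =>
      obtain ⟨t, htS, hat⟩ := hau
      obtain ⟨b, hb, hab, hbt⟩ := ih t htS hat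
      exact ⟨b, hb, hab, hbt.trans (subset_sUnion_of_mem htS)⟩

/-- Auxiliary points are isolated: closure does not create them. -/
lemma closure_ofA {S : Set (DGZ X F)} {a} (h : ofA a ∈ closure S) : ofA a ∈ S := by
  obtain ⟨y, hy1, hy2⟩ := isBasis.mem_closure_iff.mp h {ofA a} mem_basis_ba rfl
  rw [mem_singleton_iff] at hy1
  rwa [hy1] at hy2

lemma closure_bz_ofX {W : Set X} {f} {x : X} (h : (ofX x : DGZ X F) ∈ closure (bz W f)) :
    x ∈ closure W := by
  rw [mem_closure_iff]
  intro o ho hxo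
  obtain ⟨y, hy1, hy2⟩ := isBasis.mem_closure_iff.mp h (bz o fun _ => 0) (mem_basis_bz ho) hxo
  match y with
  | none => exact hy1.elim
  | some (Sum.inl x') => exact ⟨x', hy1, hy2⟩
  | some (Sum.inr (i, k)) =>
    obtain ⟨w, hw⟩ := i.prop.2.2.2
    exact ⟨w, hy1.1 hw.2, hy2.1 hw.2⟩

lemma pt_not_mem_closure_bz {W : Set X} {f} {Cs : Set X} (hC : Cs ∈ F) (hCc : IsClosed Cs)
    (hd : Cs ∩ W = ∅) : (pt : DGZ X F) ∉ closure (bz W f) := by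
  intro h
  obtain ⟨y, hy1, hy2⟩ :=
    isBasis.mem_closure_iff.mp h (bp Cs fun _ => 0) (mem_basis_bp hC hCc) trivial
  match y with
  | none => exact hy2
  | some (Sum.inl x') => exact hy1
  | some (Sum.inr (i, k)) =>
    obtain ⟨w, hw⟩ := i.prop.2.2.2
    have : w ∈ Cs ∩ W := ⟨hy1.1 hw.1, hy2.1 hw.2⟩
    rw [hd] at this
    exact this

lemma closure_bp_ofX {Cs : Set X} {g} {x : X} (hCc : IsClosed Cs)
    (h : (ofX x : DGZ X F) ∈ closure (bp Cs g)) : x ∈ Cs := by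
  by_contra hx
  obtain ⟨y, hy1, hy2⟩ :=
    isBasis.mem_closure_iff.mp h (bz Csᶜ fun _ => 0) (mem_basis_bz hCc.isOpen_compl) hx
  match y with
  | none => exact hy1
  | some (Sum.inl x') => exact hy2
  | some (Sum.inr (i, k)) =>
    obtain ⟨w, hw⟩ := i.prop.2.2.2
    exact (hy1.1 hw.2) (hy2.1 hw.1)

lemma ofX_mem_closure_bp {Cs : Set X} {g} {x : X} (hC : Cs ∈ F) (hCc : IsClosed Cs)
    (hx : x ∈ Cs) : (ofX x : DGZ X F) ∈ closure (bp Cs g) := by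
  rw [isBasis.mem_closure_iff]
  intro o ho hxo
  rcases ho with ⟨W, f, hW, rfl⟩ | ⟨a0, h⟩ | ⟨C', g', _, _, rfl⟩
  · have hxW : x ∈ W := hxo
    refine ⟨ofA (⟨(Cs, W), hC, hCc, hW, ⟨x, hx, hxW⟩⟩,
      max (f ⟨(Cs, W), hC, hCc, hW, ⟨x, hx, hxW⟩⟩) (g ⟨(Cs, W), hC, hCc, hW, ⟨x, hx, hxW⟩⟩)),
      ?_, ?_⟩
    · exact ⟨subset_rfl, le_max_left _ _⟩
    · exact ⟨subset_rfl, le_max_right _ _⟩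
  · subst h; exact absurd hxo ofX_ne_ofA
  · exact hxo.elim

lemma pt_not_mem_closure_ofA {a : DGIdx X F × ℕ} :
    (pt : DGZ X F) ∉ closure {ofA a} := by
  intro h
  obtain ⟨y, hy1, hy2⟩ := isBasis.mem_closure_iff.mp h (bp Set.univ fun _ => a.2 + 1)
    (mem_basis_bp Filter.univ_mem isClosed_univ) trivial
  rw [mem_singleton_iff] at hy2
  subst hy2
  exact absurd hy1.2 (Nat.not_succ_le_self a.2)

lemma ofX_not_mem_closure_ofA {x : X} {a : DGIdx X F × ℕ} :
    (ofX x : DGZ X F) ∉ closure {ofA a} := by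
  intro h
  obtain ⟨y, hy1, hy2⟩ := isBasis.mem_closure_iff.mp h (bz Set.univ fun _ => a.2 + 1)
    (mem_basis_bz isOpen_univ) (mem_univ x)
  rw [mem_singleton_iff] at hy2
  subst hy2
  exact absurd hy1.2 (Nat.not_succ_le_self a.2)

lemma closure_ofA_single {a : DGIdx X F × ℕ} :
    closure ({ofA a} : Set (DGZ X F)) = {ofA a} := by
  apply subset_antisymm _ subset_closure
  rintro (_ | x | aa) hy
  · exact absurd hy pt_not_mem_closure_ofA
  · exact absurd hy ofX_not_mem_closure_ofA
  · exact closure_ofA hy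

lemma closure_bz_subset {W : Set X} {f} :
    closure (bz (F := F) W f) ⊆ bz (closure W) f ∪ {pt} := by
  rintro (_ | x | aa) hz
  · exact Or.inr rfl
  · exact Or.inl (closure_bz_ofX hz)
  · exact Or.inl (bz_mono subset_closure (closure_ofA hz))

lemma closure_bz_subset' {W : Set X} {f} {Cs : Set X} (hC : Cs ∈ F) (hCc : IsClosed Cs)
    (hd : Cs ∩ W = ∅) : closure (bz (F := F) W f) ⊆ bz (closure W) f := by
  intro z hz
  rcases closure_bz_subset hz with h | h
  · exact h
  · rw [mem_singleton_iff] at h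
    subst h
    exact absurd hz (pt_not_mem_closure_bz hC hCc hd)

lemma closure_bp_subset {Cs : Set X} {g} (hCc : IsClosed Cs) :
    closure (bp (F := F) Cs g) ⊆ bp Cs g ∪ ofX '' Cs := by
  rintro (_ | x | aa) hz
  · exact Or.inl trivial
  · exact Or.inr ⟨x, closure_bp_ofX hCc hz, rfl⟩
  · exact Or.inl (closure_ofA hz)

lemma continuous_ofX : Continuous (ofX : X → DGZ X F) := by
  rw [continuous_generateFrom_iff]
  intro s hs
  rcases hs with ⟨W, f, hW, rfl⟩ | ⟨a, rfl⟩ | ⟨Cs, g, _, _, rfl⟩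
  · exact hW
  · convert isOpen_empty
    rw [eq_empty_iff_forall_notMem]
    intro x hx
    exact ofX_ne_ofA hx
  · have he : (ofX ⁻¹' bp Cs g : Set X) = ∅ := eq_empty_iff_forall_notMem.mpr fun _ hx => hx
    rw [he]; exact isOpen_empty

lemma isEmbedding_ofX : IsEmbedding (ofX : X → DGZ X F) := by
  refine ⟨⟨le_antisymm (continuous_iff_le_induced.mp continuous_ofX) ?_⟩, ?_⟩
  · intro s hs
    exact isOpen_induced_iff.mpr ⟨bz s (fun _ => 0), isOpen_bz hs, rfl⟩
  · exact ofX_injective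

end DGZ

end Extension

section SnZ

namespace DGZ

variable {X : Type u} [TopologicalSpace X] {F : Filter X}

lemma dg_isSn (m : ℕ) (hX : IsSnSpace (m + 1) X)
    (Cx : X → Set X) (V : X → ℕ → Set X)
    (hCF : ∀ x, Cx x ∈ F) (hCcl : ∀ x, IsClosed (Cx x))
    (hVo : ∀ x i, IsOpen (V x i)) (hVm : ∀ x i, x ∈ V x i)
    (hVch : ∀ x i, i < m → closure (V x i) ⊆ V x (i + 1))
    (hVtop : ∀ x, V x m = (Cx x)ᶜ) :
    IsSnSpace (m + 1) (DGZ X F) := by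
  have hVsub : ∀ x i, i ≤ m → V x i ⊆ (Cx x)ᶜ := fun x i hi =>
    (hVtop x) ▸ chain_monotone (hVch x) m le_rfl i hi
  have hVdisj : ∀ x i, i ≤ m → Cx x ∩ V x i = ∅ := by
    intro x i hi
    rw [eq_empty_iff_forall_notMem]
    rintro y ⟨hy1, hy2⟩
    exact hVsub x i hi hy2 hy1
  have hxnotC : ∀ x, x ∉ Cx x := by
    intro x hc
    have := hVm x m
    rw [hVtop x] at this
    exact this hc
  intro z y hne
  rcases z with _ | (x | a)
  · -- z = pt
    rcases y with _ | (x' | a)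
    · exact absurd rfl hne
    · -- y = ofX x' : the main case
      have hx'C : x' ∉ Cx x' := hxnotC x'
      cases m with
      | zero =>
        refine not_thetaCl_succ_of_chain (fun _ => bp (Cx x') (fun _ => 0))
          (fun i _ => ⟨isOpen_bp (hCF x') (hCcl x'), trivial⟩)
          (fun i hi => absurd hi (by omega)) ?_
        rw [eq_empty_iff_forall_notMem]
        rintro w ⟨hw1, hw2⟩
        replace hw2 := Set.mem_singleton_iff.mp hw2
        subst hw2
        exact hx'C (closure_bp_ofX (hCcl x') hw1)
      | succ k =>
        have hCOs : ∀ j, Cx x' ⊆ (closure (V x' (k - j)))ᶜ := by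
          intro j y hyC hycl
          have h1 : closure (V x' (k - j)) ⊆ V x' (k - j + 1) := hVch x' _ (by omega)
          have h2 : V x' (k - j + 1) ⊆ V x' (k + 1) :=
            chain_monotone (hVch x') (k + 1) le_rfl _ (by omega)
          have h3 := h2 (h1 hycl)
          rw [hVtop x'] at h3
          exact h3 hyC
        have hOschain : ∀ j, j + 1 < k + 1 →
            closure ((closure (V x' (k - j)))ᶜ) ⊆ (closure (V x' (k - (j + 1))))ᶜ := by
          intro j hj
          refine (closure_compl_closure_subset (hVo x' (k - j))).trans ?_
          intro y hy hy2
          have h1 : closure (V x' (k - (j + 1))) ⊆ V x' (k - (j + 1) + 1) :=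
            hVch x' _ (by omega)
          have e : k - (j + 1) + 1 = k - j := by omega
          rw [e] at h1
          exact hy (h1 hy2)
        refine not_thetaCl_succ_of_chain
          (fun j => match j with
            | 0 => bp (Cx x') (fun _ => 0)
            | j' + 1 => bp (Cx x') (fun _ => 0) ∪ bz ((closure (V x' (k - j')))ᶜ) (fun _ => 0))
          ?_ ?_ ?_
        · intro i _
          match i with
          | 0 => exact ⟨isOpen_bp (hCF x') (hCcl x'), trivial⟩
          | j + 1 =>
            exact ⟨(isOpen_bp (hCF x') (hCcl x')).union
              (isOpen_bz isClosed_closure.isOpen_compl), Or.inl trivial⟩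
        · intro i hi
          match i with
          | 0 =>
            refine (closure_bp_subset (hCcl x')).trans ?_
            rintro w (hw | hw)
            · exact Or.inl hw
            · obtain ⟨v, hv, rfl⟩ := hw
              exact Or.inr (hCOs 0 hv)
          | j + 1 =>
            have hj : j + 1 < k + 1 := by omega
            rw [closure_union]
            refine union_subset ((closure_bp_subset (hCcl x')).trans ?_)
              (closure_bz_subset.trans ?_)
            · rintro w (hw | hw)
              · exact Or.inl hw
              · obtain ⟨v, hv, rfl⟩ := hw
                exact Or.inr (hCOs (j + 1) hv)
            · rintro w (hw | hw)
              · exact Or.inr (bz_mono (hOschain j hj) hw)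
              · rw [mem_singleton_iff] at hw
                subst hw
                exact Or.inl trivial
        · rw [eq_empty_iff_forall_notMem]
          rintro w ⟨hw1, hw2⟩
          replace hw2 := Set.mem_singleton_iff.mp hw2
          subst hw2
          rw [closure_union] at hw1
          rcases hw1 with hw | hw
          · exact hx'C (closure_bp_ofX (hCcl x') hw)
          · have h1 := closure_bz_ofX hw
            have h2 := closure_compl_closure_subset (hVo x' (k - k)) h1
            rw [Nat.sub_self] at h2
            exact h2 (hVm x' 0)
    · -- y = ofA a
      cases m with
      | zero =>
        refine not_thetaCl_succ_of_chain (fun _ => bp Set.univ (fun _ => a.2 + 1))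
          (fun i _ => ⟨isOpen_bp Filter.univ_mem isClosed_univ, trivial⟩)
          (fun i hi => absurd hi (by omega)) ?_
        rw [eq_empty_iff_forall_notMem]
        rintro w ⟨hw1, hw2⟩
        replace hw2 := Set.mem_singleton_iff.mp hw2
        subst hw2
        exact Nat.not_succ_le_self a.2 (closure_ofA hw1).2
      | succ k =>
        refine not_thetaCl_succ_of_chain
          (fun j => match j with
            | 0 => bp Set.univ (fun _ => a.2 + 1)
            | _ + 1 => bp Set.univ (fun _ => a.2 + 1) ∪ bz Set.univ (fun _ => a.2 + 1))
          ?_ ?_ ?_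
        · intro i _
          match i with
          | 0 => exact ⟨isOpen_bp Filter.univ_mem isClosed_univ, trivial⟩
          | j + 1 =>
            exact ⟨(isOpen_bp Filter.univ_mem isClosed_univ).union (isOpen_bz isOpen_univ),
              Or.inl trivial⟩
        · intro i hi
          match i with
          | 0 =>
            refine (closure_bp_subset isClosed_univ).trans ?_
            rintro w (hw | hw)
            · exact Or.inl hw
            · obtain ⟨v, -, rfl⟩ := hw
              exact Or.inr (mem_univ v)
          | j + 1 =>
            rw [closure_union]
            refine union_subset ((closure_bp_subset isClosed_univ).trans ?_)
              (closure_bz_subset.trans ?_)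
            · rintro w (hw | hw)
              · exact Or.inl hw
              · obtain ⟨v, -, rfl⟩ := hw
                exact Or.inr (mem_univ v)
            · rintro w (hw | hw)
              · exact Or.inr (bz_mono (subset_univ _) hw)
              · rw [mem_singleton_iff] at hw
                subst hw
                exact Or.inl trivial
        · rw [eq_empty_iff_forall_notMem]
          rintro w ⟨hw1, hw2⟩
          replace hw2 := Set.mem_singleton_iff.mp hw2
          subst hw2
          rcases closure_ofA hw1 with hw | hw
          · exact Nat.not_succ_le_self a.2 hw.2
          · exact Nat.not_succ_le_self a.2 hw.2
  · -- z = ofX x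
    rcases y with _ | (x' | a)
    · -- y = pt
      refine not_thetaCl_succ_of_chain (fun i => bz (V x i) (fun _ => 0))
        (fun i _ => ⟨isOpen_bz (hVo x i), hVm x i⟩) ?_ ?_
      · intro i hi
        exact (closure_bz_subset' (hCF x) (hCcl x) (hVdisj x i (by omega))).trans
          (bz_mono (hVch x i (by omega)))
      · rw [eq_empty_iff_forall_notMem]
        rintro w ⟨hw1, hw2⟩
        replace hw2 := Set.mem_singleton_iff.mp hw2
        subst hw2
        exact pt_not_mem_closure_bz (hCF x) (hCcl x) (hVdisj x m le_rfl) hw1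
    · -- y = ofX x'
      have hxx' : x ≠ x' := fun h => hne (by rw [h])
      obtain ⟨Ws, hWo, hWm, hWch, hWtop⟩ := chain_of_not_thetaCl_succ (hX x x' hxx')
      have hx'W : x' ∉ closure (Ws m) := by
        intro h
        rw [eq_empty_iff_forall_notMem] at hWtop
        exact hWtop x' ⟨h, rfl⟩
      refine not_thetaCl_succ_of_chain (fun i => bz (Ws i ∩ V x i) (fun _ => 0))
        (fun i _ => ⟨isOpen_bz ((hWo i).inter (hVo x i)), ⟨hWm i, hVm x i⟩⟩) ?_ ?_
      · intro i hi
        refine (closure_bz_subset' (hCF x) (hCcl x) ?_).trans (bz_mono ?_)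
        · rw [eq_empty_iff_forall_notMem]
          rintro w ⟨hw1, hw2⟩
          exact hVsub x i (by omega) hw2.2 hw1
        · exact (closure_inter_subset_inter_closure _ _).trans
            (inter_subset_inter (hWch i (by omega)) (hVch x i (by omega)))
      · rw [eq_empty_iff_forall_notMem]
        rintro w ⟨hw1, hw2⟩
        replace hw2 := Set.mem_singleton_iff.mp hw2
        subst hw2
        exact hx'W (closure_mono inter_subset_left (closure_bz_ofX hw1))
    · -- y = ofA a
      refine not_thetaCl_succ_of_chain (fun i => bz (V x i) (fun _ => a.2 + 1))
        (fun i _ => ⟨isOpen_bz (hVo x i), hVm x i⟩) ?_ ?_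
      · intro i hi
        exact (closure_bz_subset' (hCF x) (hCcl x) (hVdisj x i (by omega))).trans
          (bz_mono (hVch x i (by omega)))
      · rw [eq_empty_iff_forall_notMem]
        rintro w ⟨hw1, hw2⟩
        replace hw2 := Set.mem_singleton_iff.mp hw2
        subst hw2
        exact Nat.not_succ_le_self a.2 (closure_ofA hw1).2
  · -- z = ofA a
    refine not_thetaCl_succ_of_chain (fun _ => {ofA a})
      (fun i _ => ⟨isOpen_ba, rfl⟩)
      (fun i _ => by rw [closure_ofA_single]) ?_
    rw [closure_ofA_single, eq_empty_iff_forall_notMem]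
    rintro w ⟨hw1, hw2⟩
    rw [mem_singleton_iff] at hw1 hw2
    exact hne (hw1.symm.trans hw2)

lemma dg_not_thetaClosed (hF : IsClosedFilter F) :
    ¬ IsThetaClosed (Set.range (ofX : X → DGZ X F)) := by
  intro h
  have hpt : (pt : DGZ X F) ∈ thetaCl 1 (Set.range ofX) := by
    intro U hU
    rw [isNHull_one_iff] at hU
    obtain ⟨b, hb, hptb, hbU⟩ := isBasis.exists_subset_of_mem_open hU.2 hU.1
    rcases hb with ⟨W, f, hW, rfl⟩ | ⟨a, rfl⟩ | ⟨Cs, g, hCs, hCc, rfl⟩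
    · exact hptb.elim
    · rw [mem_singleton_iff] at hptb
      exact absurd hptb pt_ne_ofA
    · obtain ⟨y, hy⟩ := hF.1.nonempty_of_mem hCs
      exact ⟨ofX y, (closure_mono hbU) (ofX_mem_closure_bp hCs hCc hy), ⟨y, rfl⟩⟩
  rw [IsThetaClosed] at h
  rw [h] at hpt
  obtain ⟨x, hx⟩ := hpt
  exact Option.some_ne_none (Sum.inl x : X ⊕ (DGIdx X F × ℕ)) hx

end DGZ

lemma dg_extension {X : Type u} [TopologicalSpace X] (m : ℕ) (hX : IsSnSpace (m + 1) X)
    (F : Filter X) (hF : IsClosedFilter F) (had : adTheta m F = ∅) :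
    ¬ IsSnThetaClosedSpace (m + 1) X := by
  have hx : ∀ x : X, ∃ C : Set X, C ∈ F ∧ IsClosed C ∧ x ∉ thetaCl m C := by
    intro x
    have hxx : x ∉ adTheta m F := by rw [had]; exact notMem_empty x
    rw [mem_adTheta_iff] at hxx
    push_neg at hxx
    obtain ⟨s, hs, hxs⟩ := hxx
    obtain ⟨c, hcF, hccl, hcs⟩ := hF.2 s hs
    exact ⟨c, hcF, hccl, fun h => hxs (thetaCl_mono m hcs h)⟩
  choose Cx hCF hCcl hCth using hx
  have hch : ∀ x : X, ∃ A : ℕ → Set X, (∀ i, IsOpen (A i)) ∧ (∀ i, x ∈ A i) ∧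
      (∀ i, i < m → closure (A i) ⊆ A (i + 1)) ∧ A m = (Cx x)ᶜ :=
    fun x => chain_of_not_thetaCl (hCcl x) (hCth x)
  choose V hVo hVm hVch hVtop using hch
  intro h4
  exact DGZ.dg_not_thetaClosed hF
    (h4 (DGZ X F) (DGZ.dg_isSn m hX Cx V hCF hCcl hVo hVm hVch hVtop)
      DGZ.ofX DGZ.isEmbedding_ofX)

end SnZ

/-- Dikranjan–Giuli characterization of `S(n)`-θ-closedness. -/
theorem dikranjan_giuli_characterization (n : ℕ) (hn : 1 ≤ n)
    (X : Type u) [TopologicalSpace X] (hX : IsSnSpace n X) :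
    [∀ F : Filter X, IsClosedFilter F → (adTheta (n - 1) F).Nonempty,
     ∀ G : Filter X, IsClosedFilter G → IsSnFilter (n - 1) G → (adTheta 0 G).Nonempty,
     ∀ C : Set (Set X), IsSnCover (n - 1) C →
        ∃ t : Finset (Set X), ↑t ⊆ C ∧ ⋃₀ (↑t : Set (Set X)) = Set.univ,
     IsSnThetaClosedSpace n X].TFAE := by
  obtain ⟨m, rfl⟩ : ∃ m, n = m + 1 := ⟨n - 1, by omega⟩
  simp only [Nat.add_sub_cancel]
  tfae_have 1 → 2 := impl12 m
  tfae_have 2 → 3 := impl23 m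
  tfae_have 3 → 1 := impl31 m
  tfae_have 3 → 4 := impl34 m hX
  tfae_have 4 → 1 := by
    intro h4
    by_contra h1
    push_neg at h1
    obtain ⟨F, hF, hne⟩ := h1
    exact dg_extension m hX F hF hne h4
  tfae_finish
end

section
/- (L1) Let n > 1. Every Lindelöf weakly S(n)-closed S(n)-space is S(n)-closed. -/
open Set Topology Filter Cardinal

universe u

variable {X : Type u}

/-- L1: for `n > 1`, every Lindelöf weakly `S(n)`-closed `S(n)`-space is
`S(n)`-closed. -/
theorem lindelof_weaklySnClosed_isSnClosed (n : ℕ) (hn : 1 < n)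
    (X : Type u) [TopologicalSpace X] [LindelofSpace X]
    (hS : IsSnSpace n X) (hw : WeaklySnClosed n X) : IsSnClosedSpace n X := by
  intro Z _ hSZ e he
  rw [← closure_subset_iff_isClosed]
  intro z hz
  by_contra hzr
  have hzx : ∀ x : X, e x ≠ z := fun x h => hzr (h ▸ mem_range_self x)
  obtain ⟨m, rfl⟩ : ∃ m, n = m + 1 := ⟨n - 1, by omega⟩
  have key : ∀ x : X, ∃ Vs : ℕ → Set Z,
      (∀ i < m + 1, IsOpen (Vs i) ∧ e x ∈ Vs i) ∧
      (∀ i, i + 1 < m + 1 → closure (Vs i) ⊆ Vs (i + 1)) ∧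
      z ∉ closure (Vs m) := by
    intro x
    have h := hSZ (e x) z (hzx x)
    simp only [thetaCl, mem_setOf_eq, not_forall] at h
    obtain ⟨U, hU, hne⟩ := h
    obtain ⟨Vs, h1, h2, h3⟩ := hU
    refine ⟨Vs, h1, h2, fun hc => hne ?_⟩
    refine ⟨z, ?_, rfl⟩
    rw [← h3]
    exact hc
  choose Vs hVmem hVchain hVz using key
  -- monotonicity of the chain from the bottom
  have hVmono : ∀ x : X, ∀ i, i ≤ m → Vs x 0 ⊆ Vs x i := by
    intro x i hi
    induction i with
    | zero => exact Subset.rfl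
    | succ k ih =>
      exact (ih (by omega)).trans
        ((subset_closure).trans (hVchain x k (by omega)))
  -- pulled-back hulls
  set Ws : X → ℕ → Set X := fun x i => e ⁻¹' (Vs x i) with hWs
  have hWopen : ∀ x i, i < m + 1 → IsOpen (Ws x i) :=
    fun x i hi => (hVmem x i hi).1.preimage he.continuous
  have hWmem : ∀ x i, i < m + 1 → x ∈ Ws x i := fun x i hi => (hVmem x i hi).2
  have hWchain : ∀ x i, i + 1 < m + 1 → closure (Ws x i) ⊆ Ws x (i + 1) :=
    fun x i hi =>
      (he.continuous.closure_preimage_subset _).trans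
        (preimage_mono (hVchain x i hi))
  -- Lindelöf: countable subcover from the bottom sets
  have hcov : (univ : Set X) ⊆ ⋃ x : X, Ws x 0 := fun x _ =>
    mem_iUnion.2 ⟨x, hWmem x 0 (by omega)⟩
  obtain ⟨t, htc, htcov⟩ := isLindelof_univ.elim_countable_subcover
    (fun x : X => Ws x 0) (fun x => hWopen x 0 (by omega)) hcov
  -- X is nonempty since z is in the closure of range e
  obtain ⟨w, -, x0, rfl⟩ := mem_closure_iff.mp hz univ isOpen_univ trivial
  have htne : t.Nonempty := by
    obtain ⟨s, hs⟩ := mem_iUnion.mp (htcov (mem_univ x0))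
    obtain ⟨hst, -⟩ := mem_iUnion.mp hs
    exact ⟨s, hst⟩
  obtain ⟨f, rfl⟩ := htc.exists_eq_range htne
  -- choose points of X whose images avoid the first closures
  have hpt : ∀ k : ℕ, ∃ a : X, ∀ j ≤ k, e a ∉ closure (Vs (f j) m) := by
    intro k
    have hO : IsOpen (⋃ j ∈ Finset.range (k + 1), closure (Vs (f j) m))ᶜ := by
      rw [isOpen_compl_iff]
      exact isClosed_biUnion_finset (fun j _ => isClosed_closure)
    have hzO : z ∈ (⋃ j ∈ Finset.range (k + 1), closure (Vs (f j) m))ᶜ := by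
      simp only [mem_compl_iff, mem_iUnion, not_exists]
      intro j _
      exact hVz (f j)
    obtain ⟨w, hwO, a, rfl⟩ := mem_closure_iff.mp hz _ hO hzO
    refine ⟨a, fun j hj => ?_⟩
    intro hc
    exact hwO (mem_iUnion.2 ⟨j, mem_iUnion.2 ⟨Finset.mem_range.2 (by omega), hc⟩⟩)
  choose a ha using hpt
  -- key avoidance fact
  have havoid0 : ∀ k j, j ≤ k → a k ∉ Ws (f j) 0 := by
    intro k j hjk hc
    exact ha k j hjk (subset_closure (hVmono (f j) m le_rfl hc))
  set F : Set X := Set.range a with hF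
  by_cases hfin : F.Finite
  · -- some point repeats infinitely often, contradicting the cover
    have : Finite F := hfin.to_subtype
    obtain ⟨⟨y, hy⟩, hinf⟩ :=
      Finite.exists_infinite_fiber (fun k : ℕ => (⟨a k, mem_range_self k⟩ : F))
    have hyinf : {k : ℕ | a k = y}.Infinite := by
      rw [← Set.infinite_coe_iff]
      refine Infinite.of_injective
        (fun p : ((fun k : ℕ => (⟨a k, mem_range_self k⟩ : F)) ⁻¹' {⟨y, hy⟩}) =>
          (⟨p.1, by
            have := p.2
            simp only [mem_preimage, mem_singleton_iff, Subtype.mk.injEq] at this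
            exact this⟩ : {k : ℕ | a k = y})) ?_
      intro p q hpq
      exact Subtype.ext (by simpa using congrArg Subtype.val hpq)
    obtain ⟨s, hs⟩ := mem_iUnion.mp (htcov (mem_univ y))
    obtain ⟨hst, hys⟩ := mem_iUnion.mp hs
    obtain ⟨j, rfl⟩ := hst
    obtain ⟨k, hk, hjk⟩ := hyinf.exists_gt j
    exact havoid0 k j (le_of_lt hjk) (hk ▸ hys)
  · -- F is countably infinite; use weak S(n)-closedness
    have hFinf : F.Infinite := hfin
    have : Infinite ↥F := Set.infinite_coe_iff.2 hFinf
    have hFcard : #(↥F) = Cardinal.aleph0 := by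
      refine le_antisymm ((Set.countable_range a).le_aleph0) (Cardinal.aleph0_le_mk _)
    obtain ⟨p, hp⟩ := hw F hFinf (by rw [hFcard]; exact Cardinal.isRegular_aleph0)
    obtain ⟨s, hs⟩ := mem_iUnion.mp (htcov (mem_univ p))
    obtain ⟨hst, hps⟩ := mem_iUnion.mp hs
    obtain ⟨j, rfl⟩ := hst
    -- the top of the pulled-back chain is an (m+1)-hull of p
    have hhull : IsNHull (m + 1) p (Ws (f j) m) := by
      refine ⟨Ws (f j), fun i hi => ⟨hWopen (f j) i hi, ?_⟩, hWchain (f j), rfl⟩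
      exact hVmono (f j) i (by omega) hps
    have hcard := hp (Ws (f j) m) hhull
    rw [hFcard] at hcard
    -- but F ∩ closure (Ws (f j) m) only contains a k for k < j
    have hsub : F ∩ closure (Ws (f j) m) ⊆ a '' (Set.Iio j) := by
      rintro y ⟨⟨k, rfl⟩, hyc⟩
      refine ⟨k, Set.mem_Iio.2 ?_, rfl⟩
      by_contra hk
      push_neg at hk
      exact ha k j hk (he.continuous.closure_preimage_subset _ hyc)
    have hfin2 : (F ∩ closure (Ws (f j) m)).Finite :=
      ((Set.finite_Iio j).image a).subset hsub
    have := hfin2.lt_aleph0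
    rw [hcard] at this
    exact lt_irrefl _ this
end

section
/- (L2) Let n > 1. Every linearly Lindelöf weakly S(n)-θ-closed S(n)-space is weakly S(n−1)-closed. -/
open Set Topology Filter Cardinal

universe u

variable {X : Type u}

/-- The top of an `m`-hull (for `m ≥ 1`) is an open neighborhood. -/
lemma hull_top_aux [TopologicalSpace X] {m : ℕ} (hm : 1 ≤ m) {x : X} {U : Set X}
    (h : IsNHull m x U) : IsOpen U ∧ x ∈ U := by
  obtain ⟨Us, h1, _h2, h3⟩ := h
  have := h1 (m - 1) (by omega)
  rwa [h3] at this

/-- An `m`-hull can be extended to an `(m+1)`-hull by any open set containing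
its closure. -/
lemma hull_extend_aux [TopologicalSpace X] {m : ℕ} (hm : 1 ≤ m) {x : X} {U W : Set X}
    (h : IsNHull m x U) (hW : IsOpen W) (hsub : closure U ⊆ W) :
    IsNHull (m + 1) x W := by
  have hxU : x ∈ U := (hull_top_aux hm h).2
  obtain ⟨Us, h1, h2, h3⟩ := h
  refine ⟨fun i => if i < m then Us i else W, ?_, ?_, ?_⟩
  · intro i hi
    by_cases him : i < m
    · simpa [him] using h1 i him
    · simp only [if_neg him]
      exact ⟨hW, hsub (subset_closure hxU)⟩
  · intro i hi
    have him : i < m := by omega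
    by_cases him1 : i + 1 < m
    · simpa [him, him1] using h2 i him1
    · have hieq : i = m - 1 := by omega
      simp only [if_pos him, if_neg him1]
      rw [hieq, h3]
      exact hsub
  · simp

/-- L2: for `n > 1`, every linearly Lindelöf weakly `S(n)`-θ-closed
`S(n)`-space is weakly `S(n-1)`-closed. -/
theorem linearlyLindelof_weaklySnThetaClosed_weaklySnSubOneClosed (n : ℕ) (hn : 1 < n)
    (X : Type u) [TopologicalSpace X] (hL : LinearlyLindelof X)
    (hS : IsSnSpace n X) (hw : WeaklySnThetaClosed n X) :
    WeaklySnClosed (n - 1) X := by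
  obtain ⟨m, rfl⟩ : ∃ m, n = m + 1 := ⟨n - 1, by omega⟩
  have hm : 1 ≤ m := by omega
  -- The space is T1, since it is an S(n)-space with n ≥ 1.
  haveI : T1Space X := by
    refine ⟨fun y => ?_⟩
    rw [← isOpen_compl_iff, isOpen_iff_mem_nhds]
    intro x hxy
    have hne : x ≠ y := by simpa using hxy
    have h : ¬ ∀ U : Set X, IsNHull (m + 1) x U → (closure U ∩ {y}).Nonempty := hS x y hne
    push_neg at h
    obtain ⟨U, hU, hcl⟩ := h
    obtain ⟨hUo, hxU⟩ := hull_top_aux (by omega) hU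
    filter_upwards [hUo.mem_nhds hxU] with a ha
    simp only [Set.mem_compl_iff, Set.mem_singleton_iff]
    rintro rfl
    exact Set.eq_empty_iff_forall_notMem.mp hcl a ⟨subset_closure ha, rfl⟩
  intro F hFinf hreg
  show ∃ x : X, IsThetaCompleteAccPt m F x
  by_cases hc : F.Countable
  · -- countable case: F has cardinality ℵ₀
    have hF0 : #(↥F) = Cardinal.aleph0 := by
      haveI := hc.to_subtype
      haveI := hFinf.to_subtype
      exact le_antisymm (Cardinal.mk_le_aleph0) (Cardinal.aleph0_le_mk _)
    by_contra hno
    push_neg at hno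
    simp only [IsThetaCompleteAccPt] at hno
    push_neg at hno
    choose U hU hneq using hno
    -- each trace F ∩ closure (U z) is finite
    have hfin : ∀ z : X, (F ∩ closure (U z)).Finite := by
      intro z
      rw [← Cardinal.lt_aleph0_iff_set_finite]
      have hle : #(↥(F ∩ closure (U z))) ≤ #(↥F) :=
        Cardinal.mk_le_mk_of_subset Set.inter_subset_left
      exact lt_of_le_of_ne (hle.trans_eq hF0) (by rw [← hF0]; exact hneq z)
    -- shrink each hull top to have trace at most {z}
    set T : X → Set X := fun z => U z \ ((F ∩ closure (U z)) \ {z}) with hT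
    have hTopen : ∀ z : X, IsOpen (T z) := fun z =>
      (hull_top_aux hm (hU z)).1.sdiff ((hfin z).diff).isClosed
    have hTmem : ∀ z : X, z ∈ T z := fun z =>
      ⟨(hull_top_aux hm (hU z)).2, fun hmem => hmem.2 rfl⟩
    have hTtrace : ∀ z : X, ∀ f ∈ F ∩ T z, f = z := by
      intro z f hf
      by_contra hfz
      exact hf.2.2 ⟨⟨hf.1, subset_closure hf.2.1⟩, hfz⟩
    obtain ⟨x, hx⟩ := hw F hFinf hreg
    set W : Set X := ⋃ z ∈ closure (U x), T z with hWdef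
    have hWopen : IsOpen W := isOpen_biUnion fun z _ => hTopen z
    have hWsub : closure (U x) ⊆ W := fun z hz => Set.mem_biUnion hz (hTmem z)
    have hhull : IsNHull (m + 1) x W := hull_extend_aux hm (hU x) hWopen hWsub
    have hcard : #(↥(F ∩ W)) = #(↥F) := hx W hhull
    have hsubW : F ∩ W ⊆ F ∩ closure (U x) := by
      rintro f ⟨hfF, hfW⟩
      obtain ⟨z, hz, hfT⟩ := Set.mem_iUnion₂.mp hfW
      have : f = z := hTtrace z f ⟨hfF, hfT⟩
      exact ⟨hfF, this ▸ hz⟩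
    have : #(↥(F ∩ W)) < Cardinal.aleph0 := by
      rw [Cardinal.lt_aleph0_iff_set_finite]
      exact (hfin x).subset hsubW
    rw [hcard, hF0] at this
    exact absurd this (lt_irrefl _)
  · -- uncountable case: use linear Lindelöfness
    obtain ⟨x, hx⟩ := hL F hc hreg
    refine ⟨x, fun V hV => ?_⟩
    obtain ⟨hVo, hxV⟩ := hull_top_aux hm hV
    have h1 : #(↥(F ∩ V)) = #(↥F) := hx V hVo hxV
    refine le_antisymm (Cardinal.mk_le_mk_of_subset Set.inter_subset_left) ?_
    calc #(↥F) = #(↥(F ∩ V)) := h1.symm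
      _ ≤ #(↥(F ∩ closure V)) :=
        Cardinal.mk_le_mk_of_subset (Set.inter_subset_inter_right _ subset_closure)
end

section
/- (L3) Let n > 1. Every Lindelöf weakly S(n)-θ-closed S(n)-space is S(n−1)-closed. -/
open Set Topology Filter Cardinal

universe u

variable {X : Type u}

private lemma auxChainMono {Y : Type u} [TopologicalSpace Y] (N : ℕ) {Us : ℕ → Set Y}
    (h : ∀ i, i + 1 < N → closure (Us i) ⊆ Us (i + 1)) :
    ∀ j, j < N → Us 0 ⊆ Us j := by
  intro j hj
  induction j with
  | zero => exact subset_rfl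
  | succ k ih =>
      exact (ih (by omega)).trans (subset_closure.trans (h k hj))

/-- L3: for `n > 1`, every Lindelöf weakly `S(n)`-θ-closed `S(n)`-space
is `S(n-1)`-closed. -/
theorem lindelof_weaklySnThetaClosed_isSnSubOneClosed (n : ℕ) (hn : 1 < n)
    (X : Type u) [TopologicalSpace X] [LindelofSpace X]
    (hS : IsSnSpace n X) (hw : WeaklySnThetaClosed n X) :
    IsSnClosedSpace (n - 1) X := by
  obtain ⟨n', rfl⟩ : ∃ n', n = n' + 2 := ⟨n - 2, by omega⟩
  intro Z _ hZ e he
  apply isClosed_of_closure_subset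
  intro z hz
  by_contra hzr
  rcases isEmpty_or_nonempty X with hX | hX
  · rw [Set.range_eq_empty e, closure_empty] at hz
    exact hz
  -- X is T1 (from being an S(n)-space)
  haveI hT1 : T1Space X := by
    rw [t1Space_iff_exists_open]
    intro x y hxy
    have h : ¬ ∀ U : Set X, IsNHull (n' + 2) x U → (closure U ∩ ({y} : Set X)).Nonempty :=
      hS x y hxy
    push_neg at h
    obtain ⟨U, ⟨Us, h1, h2, h3⟩, h4⟩ := h
    refine ⟨Us 0, (h1 0 (by omega)).1, (h1 0 (by omega)).2, fun hy => ?_⟩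
    have hsub : Us 0 ⊆ Us (n' + 1) := auxChainMono (n' + 2) h2 (n' + 1) (by omega)
    have h3' : Us (n' + 1) = U := h3
    rw [← not_nonempty_iff_eq_empty] at h4
    exact h4 ⟨y, subset_closure (h3' ▸ hsub hy), rfl⟩
  -- S(n-1)-separation of z from each point of the image
  have hsep : ∀ x : X, ∃ Vs : ℕ → Set Z,
      (∀ i < n' + 1, IsOpen (Vs i) ∧ z ∈ Vs i) ∧
      (∀ i, i + 1 < n' + 1 → closure (Vs i) ⊆ Vs (i + 1)) ∧
      e x ∉ closure (Vs n') := by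
    intro x
    have hne : z ≠ e x := fun h => hzr (h ▸ Set.mem_range_self x)
    have h : ¬ ∀ U : Set Z, IsNHull (n' + 1) z U → (closure U ∩ ({e x} : Set Z)).Nonempty :=
      hZ z (e x) hne
    push_neg at h
    obtain ⟨U, ⟨Vs, h1, h2, h3⟩, h4⟩ := h
    have h3' : Vs n' = U := h3
    rw [← not_nonempty_iff_eq_empty] at h4
    exact ⟨Vs, h1, h2, fun hc => h4 ⟨e x, h3' ▸ hc, rfl⟩⟩
  choose Vs hVoz hVc hVtop using hsep
  -- the pulled-back complement chains
  obtain ⟨W, openW, memW0, chainW, clWtop⟩ : ∃ W : X → ℕ → Set X,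
      (∀ x i, IsOpen (W x i)) ∧ (∀ x, x ∈ W x 0) ∧
      (∀ x i, i < n' → closure (W x i) ⊆ W x (i + 1)) ∧
      (∀ x, closure (W x n') ⊆ e ⁻¹' (Vs x 0)ᶜ) := by
    refine ⟨fun x i => e ⁻¹' (closure (Vs x (n' - i)))ᶜ, ?_, ?_, ?_, ?_⟩
    · intro x i
      exact (isClosed_closure.isOpen_compl).preimage he.continuous
    · intro x
      simpa using hVtop x
    · intro x i hi
      have hcl : closure (e ⁻¹' (closure (Vs x (n' - i)))ᶜ) ⊆ e ⁻¹' (Vs x (n' - i))ᶜ :=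
        (he.continuous.closure_preimage_subset _).trans
          (Set.preimage_mono (closure_minimal (Set.compl_subset_compl.2 subset_closure)
            ((hVoz x (n' - i) (by omega)).1.isClosed_compl)))
      refine hcl.trans ?_
      intro q hq hc
      have h5 := hVc x (n' - (i + 1)) (by omega) hc
      rw [show n' - (i + 1) + 1 = n' - i from by omega] at h5
      exact hq h5
    · intro x
      have hcl : closure (e ⁻¹' (closure (Vs x (n' - n')))ᶜ) ⊆ e ⁻¹' (Vs x (n' - n'))ᶜ :=
        (he.continuous.closure_preimage_subset _).trans
          (Set.preimage_mono (closure_minimal (Set.compl_subset_compl.2 subset_closure)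
            ((hVoz x (n' - n') (by omega)).1.isClosed_compl)))
      simpa using hcl
  have monoW : ∀ x j, j ≤ n' → W x 0 ⊆ W x j := fun x j hj =>
    auxChainMono (n' + 1) (fun i hi => chainW x i (by omega)) j (by omega)
  -- countable subcover
  obtain ⟨r, hrc, hrcov⟩ := isLindelof_univ.elim_countable_subcover (fun x : X => W x 0)
    (fun x => openW x 0) (fun q _ => Set.mem_iUnion.2 ⟨q, memW0 q⟩)
  have hrne : r.Nonempty := by
    obtain ⟨q⟩ := hX
    rcases Set.mem_iUnion₂.1 (hrcov (Set.mem_univ q)) with ⟨x, hx, _⟩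
    exact ⟨x, hx⟩
  obtain ⟨f, hf⟩ := hrc.exists_eq_range hrne
  have hcov : ∀ q : X, ∃ k : ℕ, q ∈ W (f k) 0 := by
    intro q
    rcases Set.mem_iUnion₂.1 (hrcov (Set.mem_univ q)) with ⟨x, hxr, hq⟩
    rw [hf] at hxr
    rcases hxr with ⟨k, rfl⟩
    exact ⟨k, hq⟩
  choose g hg using hcov
  set D : ℕ → Set X := fun k => closure (W (f k) n') with hD
  have hW0D : ∀ k, W (f k) 0 ⊆ D k := fun k =>
    (monoW (f k) n' le_rfl).trans subset_closure
  by_cases hcase : ∃ m, ∀ q : X, ∃ k ≤ m, q ∈ D k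
  · -- finitely many closures cover X : contradiction with z ∈ closure (range e)
    obtain ⟨m, hm⟩ := hcase
    have hN : IsOpen (⋂ k ∈ Finset.range (m + 1), Vs (f k) 0) :=
      isOpen_biInter_finset (fun k _ => (hVoz (f k) 0 (by omega)).1)
    have hzN : z ∈ ⋂ k ∈ Finset.range (m + 1), Vs (f k) 0 :=
      Set.mem_iInter₂.2 (fun k _ => (hVoz (f k) 0 (by omega)).2)
    obtain ⟨w, hwN, q, rfl⟩ := mem_closure_iff.1 hz _ hN hzN
    obtain ⟨k, hk, hqD⟩ := hm q
    exact (clWtop (f k) hqD)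
      (Set.mem_iInter₂.1 hwN k (Finset.mem_range.2 (by omega)))
  · push_neg at hcase
    choose p hp using hcase
    set F : Set X := Set.range p with hF
    have hjlt : ∀ i j, p j ∈ W (f i) 0 → j < i := by
      intro i j hj
      by_contra hle
      push_neg at hle
      exact hp j i hle (hW0D i hj)
    have hFinf : F.Infinite := by
      by_contra hFin
      rw [Set.not_infinite] at hFin
      obtain ⟨M, hM⟩ := (hFin.image g).bddAbove
      have : g (p M) ≤ M := hM ⟨p M, Set.mem_range_self M, rfl⟩
      exact hp M (g (p M)) this (hW0D _ (hg (p M)))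
    have hFmk : #(↥F) = Cardinal.aleph0 := by
      apply le_antisymm
      · haveI := (Set.countable_range p).to_subtype
        exact Cardinal.mk_le_aleph0
      · haveI := hFinf.to_subtype
        exact Cardinal.infinite_iff.1 ‹_›
    obtain ⟨x₀, hx₀⟩ := hw F hFinf (by rw [hFmk]; exact Cardinal.isRegular_aleph0)
    set k₀ : ℕ := g x₀ with hk₀def
    have hk₀ : x₀ ∈ W (f k₀) 0 := hg x₀
    set T : Set X := p '' {j | k₀ ≤ j} with hT
    have hTclosed : IsClosed T := by
      apply isClosed_of_closure_subset
      intro q hq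
      have hqW : q ∈ W (f (g q)) 0 := hg q
      set i : ℕ := g q with hidef
      have hsub : T ∩ W (f i) 0 ⊆ p '' {j | k₀ ≤ j ∧ j < i} := by
        rintro y ⟨⟨j, hj, rfl⟩, hyW⟩
        exact ⟨j, ⟨hj, hjlt i j hyW⟩, rfl⟩
      have hfin : (p '' {j | k₀ ≤ j ∧ j < i}).Finite :=
        ((Set.finite_Iio i).subset (fun j hj => hj.2)).image p
      have hq2 : q ∈ closure (T ∩ W (f i) 0) := by
        rw [mem_closure_iff] at hq ⊢
        intro o ho hqo
        obtain ⟨y, hy1, hy2⟩ := hq (o ∩ W (f i) 0) (ho.inter (openW _ _)) ⟨hqo, hqW⟩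
        exact ⟨y, hy1.1, hy2, hy1.2⟩
      have hq3 : q ∈ p '' {j | k₀ ≤ j ∧ j < i} := by
        have h6 := (closure_mono hsub) hq2
        rwa [hfin.isClosed.closure_eq] at h6
      obtain ⟨j, hj, rfl⟩ := hq3
      exact ⟨j, hj.1, rfl⟩
    have hx₀T : x₀ ∉ T := by
      rintro ⟨j, hj, hpj⟩
      have hj' : k₀ ≤ j := hj
      have : j < k₀ := hjlt k₀ j (by rw [hpj]; exact hk₀)
      omega
    -- the n-hull of x₀ whose top avoids the tail of F
    have hHull : IsNHull (n' + 2) x₀ Tᶜ := by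
      refine ⟨fun i => if i ≤ n' then W (f k₀) i else Tᶜ, ?_, ?_, ?_⟩
      · intro i hi
        by_cases h : i ≤ n'
        · simp only [if_pos h]
          exact ⟨openW _ _, monoW (f k₀) i h hk₀⟩
        · simp only [if_neg h]
          exact ⟨hTclosed.isOpen_compl, hx₀T⟩
      · intro i hi
        by_cases h : i + 1 ≤ n'
        · simp only [if_pos (by omega : i ≤ n'), if_pos h]
          exact chainW (f k₀) i (by omega)
        · rw [show i = n' from by omega]
          show closure (if n' ≤ n' then W (f k₀) n' else Tᶜ) ⊆
            (if n' + 1 ≤ n' then W (f k₀) (n' + 1) else Tᶜ)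
          rw [if_pos (le_refl n'), if_neg (by omega : ¬ (n' + 1 ≤ n'))]
          intro q hq hqT
          obtain ⟨j, hj, rfl⟩ := hqT
          exact hp j k₀ hj hq
      · exact if_neg (by omega : ¬ (n' + 2 - 1 ≤ n'))
    have hcard := hx₀ Tᶜ hHull
    have hsubfin : F ∩ Tᶜ ⊆ p '' Set.Iio k₀ := by
      rintro y ⟨⟨m, rfl⟩, hyT⟩
      refine ⟨m, ?_, rfl⟩
      rw [Set.mem_Iio]
      by_contra hmk
      push_neg at hmk
      exact hyT ⟨m, hmk, rfl⟩
    have hfin2 : (F ∩ Tᶜ).Finite := (((Set.finite_Iio k₀)).image p).subset hsubfin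
    rw [hFmk] at hcard
    exact absurd hcard (ne_of_lt hfin2.lt_aleph0)
end

section
/- (L4) Let n > 1. Every Lindelöf weakly S(n)-θ-closed S(n)-space is S(n)-θ-closed. -/
open Set Topology Filter Cardinal

universe u

variable {X : Type u}

/-- L4: for `n > 1`, every Lindelöf weakly `S(n)`-θ-closed `S(n)`-space
is `S(n)`-θ-closed. -/
theorem lindelof_weaklySnThetaClosed_isSnThetaClosed (n : ℕ) (hn : 1 < n)
    (X : Type u) [TopologicalSpace X] [LindelofSpace X]
    (hS : IsSnSpace n X) (hw : WeaklySnThetaClosed n X) :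
    IsSnThetaClosedSpace n X := by
  intro Z _ hSZ e he
  unfold IsThetaClosed
  apply Set.Subset.antisymm
  · intro z hz
    by_contra hzr
    have hz1 : ∀ U : Set Z, IsNHull 1 z U → (closure U ∩ Set.range e).Nonempty := hz
    -- separating hulls
    have hsep : ∀ x : X, ∃ Vs : ℕ → Set Z,
        (∀ i < n, IsOpen (Vs i) ∧ e x ∈ Vs i) ∧
        (∀ i, i + 1 < n → closure (Vs i) ⊆ Vs (i + 1)) ∧
        z ∉ closure (Vs (n - 1)) := by
      intro x
      have hne : e x ≠ z := fun h => hzr ⟨x, h⟩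
      obtain ⟨m, rfl⟩ : ∃ m, n = m + 1 := ⟨n - 1, (Nat.succ_pred_eq_of_pos (by omega)).symm⟩
      have h2 : ¬ ∀ U : Set Z, IsNHull (m + 1) (e x) U →
          (closure U ∩ ({z} : Set Z)).Nonempty := hSZ (e x) z hne
      push_neg at h2
      obtain ⟨U, hU, hUz⟩ := h2
      obtain ⟨Vs, ha, hb, hc⟩ := hU
      refine ⟨Vs, ha, hb, fun hmem => ?_⟩
      rw [hc] at hmem
      exact Set.eq_empty_iff_forall_notMem.mp hUz z ⟨hmem, rfl⟩
    choose Vs hVo hVc hVz using hsep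
    -- monotonicity along the chain
    have hmono : ∀ x : X, ∀ i j : ℕ, i ≤ j → j < n → Vs x i ⊆ Vs x j := by
      intro x i j hij hj
      induction j with
      | zero =>
        have : i = 0 := Nat.le_zero.mp hij
        simp [this]
      | succ j ih =>
        rcases Nat.lt_or_ge i (j + 1) with h | h
        · exact ((ih (by omega) (by omega)).trans subset_closure).trans (hVc x j (by omega))
        · have : i = j + 1 := by omega
          simp [this]
    -- Lindelöf: countable subcover of the first elements
    have hcov : (Set.univ : Set X) ⊆ ⋃ x : X, e ⁻¹' (Vs x 0) := fun y _ =>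
      Set.mem_iUnion.2 ⟨y, (hVo y 0 (by omega)).2⟩
    obtain ⟨t, htc, htcov⟩ := (isLindelof_univ (X := X)).elim_countable_subcover
      (fun x => e ⁻¹' (Vs x 0))
      (fun x => (hVo x 0 (by omega)).1.preimage he.continuous) hcov
    have hXne : Nonempty X := by
      obtain ⟨w, -, x, -⟩ := hz1 Set.univ
        ⟨fun _ => Set.univ, fun i _ => ⟨isOpen_univ, trivial⟩, fun i h => by omega, rfl⟩
      exact ⟨x⟩
    have htne : t.Nonempty := by
      obtain ⟨p⟩ := hXne
      obtain ⟨x, hx, -⟩ := Set.mem_iUnion₂.1 (htcov (Set.mem_univ p))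
      exact ⟨x, hx⟩
    obtain ⟨f, hf⟩ := htc.exists_eq_range htne
    have hcover : ∀ p : X, ∃ k, e p ∈ Vs (f k) 0 := by
      intro p
      obtain ⟨x, hx, hpx⟩ := Set.mem_iUnion₂.1 (htcov (Set.mem_univ p))
      rw [hf] at hx
      obtain ⟨k, rfl⟩ := hx
      exact ⟨k, hpx⟩
    -- neighborhoods of z
    set O : ℕ → Set Z := fun m => ⋂ k ∈ Set.Iic m, (closure (Vs (f k) (n - 1)))ᶜ with hO
    have hOopen : ∀ m, IsOpen (O m) := fun m =>
      (Set.finite_Iic m).isOpen_biInter fun k _ => isClosed_closure.isOpen_compl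
    have hzO : ∀ m, z ∈ O m := fun m => Set.mem_biInter fun k _ => hVz (f k)
    have hOsub : ∀ k m, k ≤ m → closure (O m) ⊆ (Vs (f k) (n - 1))ᶜ := by
      intro k m hkm
      have h1 : O m ⊆ (Vs (f k) (n - 1))ᶜ :=
        (Set.biInter_subset_of_mem (Set.mem_Iic.2 hkm)).trans
          (Set.compl_subset_compl.2 subset_closure)
      exact ((hVo (f k) (n - 1) (by omega)).1.isClosed_compl.closure_subset_iff).2 h1
    -- pick points of e '' X in closures of the O m
    have hym : ∀ m : ℕ, ∃ p : X, e p ∈ closure (O m) := by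
      intro m
      obtain ⟨w, hw1, x, hx⟩ := hz1 (O m)
        ⟨fun _ => O m, fun i _ => ⟨hOopen m, hzO m⟩, fun i h => by omega, rfl⟩
      exact ⟨x, hx ▸ hw1⟩
    choose y hy using hym
    have hkey : ∀ k m, k ≤ m → e (y m) ∉ Vs (f k) (n - 1) :=
      fun k m hkm hmem => hOsub k m hkm (hy m) hmem
    set F : Set X := Set.range y with hF
    have hFinf : F.Infinite := by
      by_contra hfin
      rw [Set.not_infinite] at hfin
      have hfib : ∃ a ∈ F, {m | y m = a}.Infinite := by
        by_contra hcon
        push_neg at hcon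
        have hsub : (Set.univ : Set ℕ) ⊆ ⋃ a ∈ F, {m | y m = a} := fun m _ =>
          Set.mem_biUnion ⟨m, rfl⟩ rfl
        exact Set.infinite_univ
          ((hfin.biUnion fun a ha => hcon a ha).subset hsub)
      obtain ⟨a, -, hainf⟩ := hfib
      obtain ⟨k, hk⟩ := hcover a
      obtain ⟨m, hm, hkm⟩ := hainf.exists_gt k
      have : e (y m) ∈ Vs (f k) (n - 1) := by
        rw [Set.mem_setOf_eq] at hm
        rw [hm]
        exact hmono (f k) 0 (n - 1) (Nat.zero_le _) (by omega) hk
      exact hkey k m hkm.le this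
    have hFcard : #(↥F) = Cardinal.aleph0 := by
      apply le_antisymm
      · exact Cardinal.mk_le_aleph0_iff.2 (Set.countable_range y).to_subtype
      · exact Cardinal.infinite_iff.1 (Set.infinite_coe_iff.2 hFinf)
    obtain ⟨x, hx⟩ := hw F hFinf (hFcard ▸ Cardinal.isRegular_aleph0)
    obtain ⟨k, hk⟩ := hcover x
    have hhull : IsNHull n x (e ⁻¹' (Vs (f k) (n - 1))) := by
      refine ⟨fun i => e ⁻¹' (Vs (f k) i),
        fun i hi => ⟨(hVo (f k) i hi).1.preimage he.continuous,
          hmono (f k) 0 i (Nat.zero_le i) hi hk⟩,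
        fun i hi => ?_, rfl⟩
      exact (he.continuous.closure_preimage_subset _).trans
        (Set.preimage_mono (hVc (f k) i hi))
    have hcard := hx _ hhull
    have hinf : (F ∩ e ⁻¹' (Vs (f k) (n - 1))).Infinite := by
      rw [← Set.infinite_coe_iff, Cardinal.infinite_iff, hcard, hFcard]
    have hfin2 : (y '' Set.Iic k).Finite := (Set.finite_Iic k).image y
    obtain ⟨p, hpFU, hpIm⟩ := (hinf.diff hfin2).nonempty
    obtain ⟨m, hyp⟩ := hpFU.1
    have hkm : k ≤ m := by
      by_contra h
      exact hpIm ⟨m, Set.mem_Iic.2 (by omega), hyp⟩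
    exact hkey k m hkm (by rw [hyp]; exact hpFU.2)
  · intro z hz U hU
    obtain ⟨Us, h1, h2, h3⟩ := hU
    have hzU : z ∈ U := by
      rw [← h3]
      exact (h1 0 (by norm_num)).2
    exact ⟨z, subset_closure hzU, hz⟩
end
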